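/- arXiv:math/0507263 — 3 statements merged into one kernel-verified Lean document; each statement's English description precedes it below -/
import Mathlib

section
/- Let E(μw) decompose by homogeneity: F_λ(μw) = μ²(2-λ)S(w) + μ³E₃(w) + μ⁴E₄(w), where S(w) > 0, E₃(w) < 0, E₄(w) > 0, and E₂(w) = 2S(w). Then the supremum of F_λ(μw) over μ ∈ [0,1] is attained at μ* = (3|E₃|/(8E₄))(1 - √(1 - 32(2-λ)S E₄/(9E₃²))) when 2-λ is small enough, and sup_{0≤μ≤1} F_λ(μw) = O((2-λ)³) as λ → 2⁻. -/
set_option maxHeartbeats 1000000 in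
/-- for `g(μ) = μ²(2-λ)S + μ³E₃ + μ⁴E₄` with `S, E₄ > 0`, `E₃ < 0`
and `S + E₃ + E₄ < 0`, when `2-λ > 0` is small enough the supremum of `g` over
`[0,1]` is attained at
`μ* = (3|E₃|/(8E₄))(1 - √(1 - 32(2-λ)S E₄/(9E₃²)))`, and
`max_{μ∈[0,1]} g(μ) ≤ c (2-λ)³` for a constant `c` depending on `S, E₃, E₄`. -/
theorem stmt_3 (S E3 E4 : ℝ) (hS : 0 < S) (hE3 : E3 < 0) (hE4 : 0 < E4)
    (hsum : S + E3 + E4 < 0) :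
    ∃ c > (0 : ℝ), ∃ ε > (0 : ℝ), ∀ lam : ℝ, 0 < 2 - lam → 2 - lam < ε →
      IsMaxOn (fun μ : ℝ => μ ^ 2 * ((2 - lam) * S) + μ ^ 3 * E3 + μ ^ 4 * E4)
        (Set.Icc 0 1)
        ((3 * |E3| / (8 * E4)) *
          (1 - Real.sqrt (1 - 32 * ((2 - lam) * S) * E4 / (9 * E3 ^ 2)))) ∧
      ∀ μ ∈ Set.Icc (0 : ℝ) 1,
        μ ^ 2 * ((2 - lam) * S) + μ ^ 3 * E3 + μ ^ 4 * E4 ≤ c * (2 - lam) ^ 3 := by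
  have hE3' : 0 < -E3 := by linarith
  have hE3ne : (E3 : ℝ) ≠ 0 := ne_of_lt hE3
  have hE3sq : 0 < E3 ^ 2 := by positivity
  have hE34 : E3 + E4 < 0 := by linarith
  have hc : (0:ℝ) < 16 * S ^ 3 / (9 * E3 ^ 2) + 256 * S ^ 4 * E4 / (81 * E3 ^ 4) := by positivity
  have hεpos : (0:ℝ) < min (min (9 * E3 ^ 2 / (32 * S * E4)) (3 * (-E3) / (4 * S)))
      (min ((-(E3 + E4)) / (S + 16 * E4 * S ^ 2 / (3 * E3 ^ 2))) 1) := by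
    refine lt_min (lt_min (by positivity) (by positivity)) (lt_min (div_pos (by linarith) (by positivity)) one_pos)
  refine ⟨16 * S ^ 3 / (9 * E3 ^ 2) + 256 * S ^ 4 * E4 / (81 * E3 ^ 4), hc,
    min (min (9 * E3 ^ 2 / (32 * S * E4)) (3 * (-E3) / (4 * S)))
      (min ((-(E3 + E4)) / (S + 16 * E4 * S ^ 2 / (3 * E3 ^ 2))) 1),
    hεpos, ?_⟩
  intro lam hδ0 hδε
  set δ := 2 - lam with hδdef
  have hδ1 : δ < 9 * E3 ^ 2 / (32 * S * E4) := lt_of_lt_of_le hδε (le_trans (min_le_left _ _) (min_le_left _ _))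
  have hδ2 : δ < 3 * (-E3) / (4 * S) := lt_of_lt_of_le hδε (le_trans (min_le_left _ _) (min_le_right _ _))
  have hδ3 : δ < (-(E3 + E4)) / (S + 16 * E4 * S ^ 2 / (3 * E3 ^ 2)) := lt_of_lt_of_le hδε (le_trans (min_le_right _ _) (min_le_left _ _))
  have hδ4 : δ < 1 := lt_of_lt_of_le hδε (le_trans (min_le_right _ _) (min_le_right _ _))
  -- clear denominators in the δ bounds
  have hδ1' : 32 * S * E4 * δ < 9 * E3 ^ 2 := by
    rw [lt_div_iff₀ (by positivity)] at hδ1; linarith [hδ1]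
  have hδ2' : 4 * S * δ < 3 * (-E3) := by
    rw [lt_div_iff₀ (by positivity)] at hδ2; linarith [hδ2]
  have hδ3' : δ * (S + 16 * E4 * S ^ 2 / (3 * E3 ^ 2)) < -(E3 + E4) := by
    rw [lt_div_iff₀ (by positivity)] at hδ3; linarith [hδ3]
  have hδ3'' : 3 * E3 ^ 2 * S * δ + 16 * E4 * S ^ 2 * δ < 3 * E3 ^ 2 * (-(E3 + E4)) := by
    have hB : δ * (S + 16 * E4 * S ^ 2 / (3 * E3 ^ 2))
        = (3 * E3 ^ 2 * S * δ + 16 * E4 * S ^ 2 * δ) / (3 * E3 ^ 2) := by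
      field_simp
    rw [hB, div_lt_iff₀ (by positivity)] at hδ3'
    nlinarith [hδ3']
  -- the square root argument
  set u : ℝ := 32 * (δ * S) * E4 / (9 * E3 ^ 2) with hudef
  have hu0 : 0 < u := by positivity
  have hu1 : u < 1 := by
    rw [div_lt_one (by positivity)]; nlinarith [hδ1']
  set r : ℝ := Real.sqrt (1 - u) with hrdef
  have hr0 : 0 ≤ r := Real.sqrt_nonneg _
  have hr2 : r ^ 2 = 1 - u := Real.sq_sqrt (by linarith)
  have hr1 : r ≤ 1 := by nlinarith [hr2, hu0]
  have habs : |E3| = -E3 := abs_of_neg hE3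
  set m : ℝ := 3 * |E3| / (8 * E4) * (1 - r) with hmdef
  have hmdef' : m = 3 * (-E3) / (8 * E4) * (1 - r) := by rw [hmdef, habs]
  have hm0 : 0 ≤ m := by
    rw [hmdef']
    have : 0 ≤ 1 - r := by linarith
    positivity
  -- key quadratic equation satisfied by m
  have hq : 4 * E4 * m ^ 2 + 3 * E3 * m + 2 * (δ * S) = 0 := by
    rw [hmdef']
    have hE4ne : (E4 : ℝ) ≠ 0 := ne_of_gt hE4
    have hr2' : r ^ 2 = 1 - 32 * (δ * S) * E4 / (9 * E3 ^ 2) := hr2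
    field_simp at hr2' ⊢
    linear_combination 4 * hr2' - 4 * 32 * S * E4 * hδdef
  -- m is at most 3(-E3)/(8E4)
  have hmub : m ≤ 3 * (-E3) / (8 * E4) := by
    rw [hmdef']
    have h1 : 1 - r ≤ 1 := by linarith
    have h2 : (0:ℝ) ≤ 3 * (-E3) / (8 * E4) := by positivity
    calc 3 * (-E3) / (8 * E4) * (1 - r) ≤ 3 * (-E3) / (8 * E4) * 1 :=
          mul_le_mul_of_nonneg_left h1 h2
      _ = 3 * (-E3) / (8 * E4) := mul_one _
  have hmub' : 8 * E4 * m ≤ 3 * (-E3) := by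
    rw [le_div_iff₀ (by positivity)] at hmub
    linarith [hmub]
  -- hence a linear bound: 3(-E3) m ≤ 4 δ S
  have hmle : 3 * (-E3) * m ≤ 4 * (δ * S) := by
    nlinarith [hq, mul_nonneg hm0 (sub_nonneg.mpr hmub')]
  clear_value m r u δ
  clear hδε hδ1 hδ2 hδ3 hδ3' hδdef hudef hrdef hmdef hmdef' hmub hc hεpos hu0 hu1 hr0 hr1 hr2 habs hmub' u r lam
  have hm1 : m ≤ 1 := by nlinarith [hmle, hδ2', hm0]
  -- m < -E3/(2E4), strictly
  have hmhalf : E3 + 2 * E4 * m < 0 := by nlinarith [hmle, hδ1', hm0]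
  have hm2 : 9 * E3 ^ 2 * m ^ 2 ≤ 16 * (δ * S) ^ 2 := by
    nlinarith [hmle, hm0, mul_le_mul hmle hmle (by positivity) (by positivity)]
  have hm2E4 : 9 * E3 ^ 2 * E4 * m ^ 2 ≤ 16 * E4 * (δ * S) ^ 2 := by
    nlinarith [mul_le_mul_of_nonneg_left hm2 hE4.le]
  have hδsq : 16 * E4 * (δ * S) ^ 2 ≤ 16 * E4 * S ^ 2 * δ := by
    have hδδ : δ ^ 2 ≤ δ := by nlinarith [hδ4, hδ0]
    have h := mul_le_mul_of_nonneg_left hδδ (show (0:ℝ) ≤ 16 * E4 * S ^ 2 by positivity)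
    nlinarith [h]
  have hmE34 : m * (E3 + E4) ≤ 0 := mul_nonpos_of_nonneg_of_nonpos hm0 hE34.le
  -- quotient polynomial values
  have hP0 : δ * S + 2 * E3 * m + 3 * E4 * m ^ 2 ≤ 0 := by
    nlinarith [hq, mul_nonpos_of_nonneg_of_nonpos hm0 hmhalf.le]
  have hP1 : E4 + (E3 + 2 * E4 * m) + (δ * S + 2 * E3 * m + 3 * E4 * m ^ 2) ≤ 0 := by
    have key : 3 * E3 ^ 2 * (E4 + (E3 + 2 * E4 * m) + (δ * S + 2 * E3 * m + 3 * E4 * m ^ 2)) < 0 := by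
      have h6 := mul_nonpos_of_nonneg_of_nonpos (show (0:ℝ) ≤ 6 * E3 ^ 2 by positivity) hmE34
      linarith [hδ3'', hm2E4, hδsq, h6]
    by_contra hcon
    push_neg at hcon
    have hpos := mul_pos (show (0:ℝ) < 3 * E3 ^ 2 by positivity) hcon
    linarith [key, hpos]
  have hPle : ∀ x : ℝ, 0 ≤ x → x ≤ 1 →
      x ^ 2 * (δ * S) + x ^ 3 * E3 + x ^ 4 * E4 ≤
        m ^ 2 * (δ * S) + m ^ 3 * E3 + m ^ 4 * E4 := by
    intro x hx0 hx1
    have hPx : E4 * x ^ 2 + (E3 + 2 * E4 * m) * x + (δ * S + 2 * E3 * m + 3 * E4 * m ^ 2) ≤ 0 := by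
      nlinarith [mul_nonneg hx0 (neg_nonneg.mpr hP1),
        mul_nonneg (sub_nonneg.mpr hx1) (neg_nonneg.mpr hP0),
        mul_nonneg (mul_nonneg hx0 (sub_nonneg.mpr hx1)) hE4.le]
    have hq' : (x - m) * m * (4 * E4 * m ^ 2 + 3 * E3 * m + 2 * (δ * S)) = 0 :=
      mul_eq_zero_of_right _ hq
    nlinarith [mul_nonpos_of_nonneg_of_nonpos (sq_nonneg (x - m)) hPx, hq']
  constructor
  · -- IsMaxOn
    rw [isMaxOn_iff]
    intro x hx
    simp only [Set.mem_Icc] at hx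
    exact hPle x hx.1 hx.2
  · -- the cubic bound
    intro μ hμ
    simp only [Set.mem_Icc] at hμ
    have hmax := hPle μ hμ.1 hμ.2
    -- bound g(m) by c δ³
    have hgm : m ^ 2 * (δ * S) + m ^ 3 * E3 + m ^ 4 * E4 ≤
        (16 * S ^ 3 / (9 * E3 ^ 2) + 256 * S ^ 4 * E4 / (81 * E3 ^ 4)) * δ ^ 3 := by
      have h1 : m ^ 3 * E3 ≤ 0 := by
        have := pow_nonneg hm0 3
        nlinarith [this]
      have h2 : m ^ 2 * (δ * S) ≤ 16 * S ^ 3 / (9 * E3 ^ 2) * δ ^ 3 := by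
        rw [div_mul_eq_mul_div, le_div_iff₀ (by positivity)]
        nlinarith [mul_le_mul_of_nonneg_right hm2 (le_of_lt (show (0:ℝ) < δ * S by positivity))]
      have h3 : m ^ 4 * E4 ≤ 256 * S ^ 4 * E4 / (81 * E3 ^ 4) * δ ^ 3 := by
        rw [div_mul_eq_mul_div, le_div_iff₀ (by positivity)]
        have hm4 : 81 * E3 ^ 4 * m ^ 4 ≤ 256 * (δ * S) ^ 4 := by
          nlinarith [hm2, sq_nonneg m, mul_le_mul hm2 hm2 (by positivity) (by positivity)]
        have hδ44 : (δ * S) ^ 4 ≤ δ ^ 3 * S ^ 4 := by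
          nlinarith [hδ4, hδ0, sq_nonneg δ, pow_pos hS 4, pow_pos hδ0 3]
        nlinarith [mul_le_mul_of_nonneg_right hm4 hE4.le, hδ44, pow_pos hE4 1]
      linarith [h1, h2, h3]
    linarith [hmax, hgm]
end

section
/- For the function w_δ(x,y) = f_δ(y+x) + f_δ(y-x) - (1/2)f_δ(2x) - (1/2)y², the integral over the period cell [-1/2,1/2]² of [w_δ,w_δ] + (w_δ)_xx equals zero. -/
open MeasureTheory intervalIntegral
open scoped Classical

noncomputable def pdx (f : ℝ × ℝ → ℝ) (p : ℝ × ℝ) : ℝ := fderiv ℝ f p (1, 0)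
noncomputable def pdy (f : ℝ × ℝ → ℝ) (p : ℝ × ℝ) : ℝ := fderiv ℝ f p (0, 1)

noncomputable def gg (δ : ℝ) : ℝ → ℝ :=
  fun s => if ∃ n : ℤ, |s - (n : ℝ)| < δ then 1 / (4 * δ) else 0

lemma gg_meas (δ : ℝ) : Measurable (gg δ) := by
  have : MeasurableSet {s : ℝ | ∃ n : ℤ, |s - (n : ℝ)| < δ} := by
    have : {s : ℝ | ∃ n : ℤ, |s - (n : ℝ)| < δ} = ⋃ n : ℤ, {s : ℝ | |s - (n : ℝ)| < δ} := by
      ext s; simp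
    rw [this]
    exact MeasurableSet.iUnion fun n =>
      (isOpen_lt (by continuity) continuous_const).measurableSet
  exact Measurable.ite this measurable_const measurable_const

lemma gg_nonneg (δ : ℝ) (hδ : 0 < δ) (s : ℝ) : 0 ≤ gg δ s := by
  unfold gg; split <;> positivity

lemma gg_le (δ : ℝ) (hδ : 0 < δ) (s : ℝ) : gg δ s ≤ 1 / (4 * δ) := by
  unfold gg; split
  · exact le_refl _
  · positivity

lemma gg_abs_le (δ : ℝ) (hδ : 0 < δ) (s : ℝ) : |gg δ s| ≤ 1 / (4 * δ) := by
  rw [abs_of_nonneg (gg_nonneg δ hδ s)]; exact gg_le δ hδ s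

lemma gg_per (δ : ℝ) : Function.Periodic (gg δ) 1 := by
  intro s
  unfold gg
  congr 1
  simp only [eq_iff_iff]
  constructor
  · rintro ⟨n, hn⟩; exact ⟨n - 1, by push_cast; rw [show s - (n - 1 : ℝ) = s + 1 - n by ring]; exact hn⟩
  · rintro ⟨n, hn⟩; exact ⟨n + 1, by push_cast; rw [show s + 1 - (n + 1 : ℝ) = s - n by ring]; exact hn⟩

lemma gg_one (δ : ℝ) (s : ℝ) (h : |s| < δ) : gg δ s = 1 / (4 * δ) := by
  unfold gg
  rw [if_pos ⟨0, by simpa using h⟩]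

lemma gg_zero (δ : ℝ) (hδ' : δ < 1/2) (s : ℝ) (h1 : δ ≤ |s|) (h2 : |s| ≤ 1 - δ) :
    gg δ s = 0 := by
  unfold gg
  rw [if_neg]
  rintro ⟨n, hn⟩
  rcases eq_or_ne n 0 with rfl | hn0
  · simp at hn; exact absurd hn (not_lt.2 h1)
  · have h1n : (1 : ℝ) ≤ |(n : ℝ)| := by exact_mod_cast Int.one_le_abs hn0
    have : |(n : ℝ)| - |s| ≤ |s - n| := by
      have := abs_sub_abs_le_abs_sub (n : ℝ) s
      rw [abs_sub_comm] at this; linarith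
    linarith

lemma gg_contAt (δ : ℝ) (hδ : 0 < δ) (s : ℝ) (h : ∀ n : ℤ, |s - (n : ℝ)| ≠ δ) :
    ContinuousAt (gg δ) s := by
  by_cases hs : ∃ n : ℤ, |s - (n : ℝ)| < δ
  · -- locally constant 1/(4δ)
    obtain ⟨n, hn⟩ := hs
    have : ∀ᶠ t in nhds s, gg δ t = 1 / (4 * δ) := by
      have hopen : ∀ᶠ t in nhds s, |t - (n : ℝ)| < δ := by
        have : ContinuousAt (fun t : ℝ => |t - (n : ℝ)|) s := by fun_prop
        exact this.eventually_lt continuousAt_const hn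
      filter_upwards [hopen] with t ht
      unfold gg; rw [if_pos ⟨n, ht⟩]
    exact Filter.EventuallyEq.continuousAt (by
      filter_upwards [this] with t ht
      exact ht)
  · have hgt : ∀ n : ℤ, δ < |s - (n : ℝ)| := by
      intro n
      rcases lt_trichotomy (|s - (n : ℝ)|) δ with h' | h' | h'
      · exact absurd ⟨n, h'⟩ hs
      · exact absurd h' (h n)
      · exact h'
    set m := round s with hm
    have hr : |s - (m : ℝ)| ≤ 1/2 := by
      exact abs_sub_round s
    have hrδ : δ < |s - (m : ℝ)| := hgt m
    have : ∀ᶠ t in nhds s, gg δ t = 0 := by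
      have : Metric.ball s (|s - (m : ℝ)| - δ) ∈ nhds s :=
        Metric.ball_mem_nhds s (by linarith)
      filter_upwards [this] with t ht
      unfold gg
      rw [if_neg]
      rintro ⟨n, hn⟩
      have hts : |t - s| < |s - (m : ℝ)| - δ := by
        simpa [Real.dist_eq] using ht
      have h1 : |s - (n : ℝ)| < |s - (m : ℝ)| := by
        have := abs_sub (s - (n : ℝ)) (t - (n:ℝ))
        have : |s - (n : ℝ)| ≤ |s - t| + |t - (n : ℝ)| := abs_sub_le s t n
        rw [abs_sub_comm s t] at this
        linarith
      have hnm : n = m := by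
        have : |(n : ℝ) - (m : ℝ)| < 1 := by
          have := abs_sub_le ((n : ℝ)) s m
          have h2 : |(n:ℝ) - s| = |s - (n:ℝ)| := abs_sub_comm _ _
          nlinarith [abs_sub_le ((n : ℝ)) s ((m : ℝ)), abs_sub_comm (n:ℝ) s]
        rw [← Int.cast_sub, ← Int.cast_abs, ← Int.cast_one, Int.cast_lt, abs_lt] at this
        omega
      rw [hnm] at h1
      exact absurd h1 (lt_irrefl _)
    exact Filter.EventuallyEq.continuousAt (by
      filter_upwards [this] with t ht
      exact ht)

lemma bdd_intervalIntegrable (φ : ℝ → ℝ) (hm : Measurable φ) (C : ℝ)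
    (hC : ∀ s, |φ s| ≤ C) (a b : ℝ) : IntervalIntegrable φ volume a b := by
  rw [intervalIntegrable_iff]
  exact Measure.integrableOn_of_bounded measure_Ioc_lt_top.ne hm.aestronglyMeasurable
    (Filter.Eventually.of_forall fun s => by simpa using hC s)

lemma gg_ii (δ : ℝ) (hδ : 0 < δ) (a b : ℝ) : IntervalIntegrable (gg δ) volume a b :=
  bdd_intervalIntegrable _ (gg_meas δ) _ (gg_abs_le δ hδ) a b

lemma int_gg_base (δ : ℝ) (hδ : 0 < δ) (hδ' : δ < 1/2) :
    ∫ s in (-(1:ℝ)/2)..(1/2 : ℝ), gg δ s = 1/2 := by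
  have key : ∀ a b : ℝ, a ≤ b → (∀ s ∈ Set.Ioo a b, gg δ s = 1/(4*δ)) →
      ∫ s in a..b, gg δ s = (b - a) * (1/(4*δ)) := by
    intro a b hab h
    rw [intervalIntegral.integral_of_le hab, integral_Ioc_eq_integral_Ioo,
      setIntegral_congr_fun measurableSet_Ioo h, setIntegral_const, measureReal_def, Real.volume_Ioo]
    rw [ENNReal.toReal_ofReal (by linarith), smul_eq_mul]
  have key0 : ∀ a b : ℝ, a ≤ b → (∀ s ∈ Set.Ioo a b, gg δ s = 0) →
      ∫ s in a..b, gg δ s = 0 := by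
    intro a b hab h
    rw [intervalIntegral.integral_of_le hab, integral_Ioc_eq_integral_Ioo,
      setIntegral_congr_fun measurableSet_Ioo h, setIntegral_const, smul_zero]
  have h1 : ∫ s in (-(1:ℝ)/2)..(-δ), gg δ s = 0 := by
    apply key0 _ _ (by linarith)
    intro s hs
    apply gg_zero δ hδ'
    · rw [abs_of_neg (by cases hs; linarith)]; linarith [hs.2]
    · rw [abs_of_neg (by cases hs; linarith)]; linarith [hs.1]
  have h2 : ∫ s in (-δ)..δ, gg δ s = 1/2 := by
    rw [key (-δ) δ (by linarith) (fun s hs => gg_one δ s (abs_lt.2 ⟨hs.1, hs.2⟩))]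
    field_simp
    ring
  have h3 : ∫ s in δ..(1/2 : ℝ), gg δ s = 0 := by
    apply key0 _ _ (by linarith)
    intro s hs
    apply gg_zero δ hδ'
    · rw [abs_of_pos (by cases hs; linarith)]; linarith [hs.1]
    · rw [abs_of_pos (by cases hs; linarith)]; linarith [hs.2]
  have := intervalIntegral.integral_add_adjacent_intervals
    (gg_ii δ hδ (-(1:ℝ)/2) (-δ)) (gg_ii δ hδ (-δ) δ)
  have h4 : ∫ s in (-(1:ℝ)/2)..δ, gg δ s = 1/2 := by rw [← this, h1, h2]; ring
  have := intervalIntegral.integral_add_adjacent_intervals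
    (gg_ii δ hδ (-(1:ℝ)/2) δ) (gg_ii δ hδ δ (1/2))
  rw [← this, h3, h4]; ring

lemma int_gg_period (δ : ℝ) (hδ : 0 < δ) (hδ' : δ < 1/2) (a : ℝ) :
    ∫ s in a..(a+1), gg δ s = 1/2 := by
  rw [Function.Periodic.intervalIntegral_add_eq (gg_per δ) a (-(1:ℝ)/2),
    show (-(1:ℝ)/2 + 1) = 1/2 by norm_num]
  exact int_gg_base δ hδ hδ'

noncomputable def GG (δ : ℝ) : ℝ → ℝ := fun s => ∫ t in (0:ℝ)..s, gg δ t
noncomputable def FF (δ : ℝ) : ℝ → ℝ := fun s => ∫ t in (0:ℝ)..s, (s - t) * gg δ t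

lemma GG_hasDeriv (δ : ℝ) (hδ : 0 < δ) (s : ℝ) (h : ∀ n : ℤ, |s - (n : ℝ)| ≠ δ) :
    HasDerivAt (GG δ) (gg δ s) s :=
  intervalIntegral.integral_hasDerivAt_right (gg_ii δ hδ 0 s)
    ((gg_meas δ).aestronglyMeasurable.stronglyMeasurableAtFilter)
    (gg_contAt δ hδ s h)

lemma lin_gg_ii (δ : ℝ) (hδ : 0 < δ) (x a b : ℝ) :
    IntervalIntegrable (fun t => (x - t) * gg δ t) volume a b :=
  (gg_ii δ hδ a b).continuousOn_mul (by fun_prop)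

lemma FF_hasDeriv (δ : ℝ) (hδ : 0 < δ) (s : ℝ) : HasDerivAt (FF δ) (GG δ s) s := by
  rw [hasDerivAt_iff_isLittleO]
  set M := 1 / (4 * δ) with hM
  have hM0 : 0 ≤ M := by positivity
  have key : ∀ x : ℝ, FF δ x - FF δ s - (x - s) • GG δ s = ∫ t in s..x, (x - t) * gg δ t := by
    intro x
    have h1 : FF δ x = (∫ t in (0:ℝ)..s, (x - t) * gg δ t) + ∫ t in s..x, (x - t) * gg δ t :=
      (intervalIntegral.integral_add_adjacent_intervals
        (lin_gg_ii δ hδ x 0 s) (lin_gg_ii δ hδ x s x)).symm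
    have h2 : (∫ t in (0:ℝ)..s, (x - t) * gg δ t)
        = (∫ t in (0:ℝ)..s, (s - t) * gg δ t) + (x - s) * ∫ t in (0:ℝ)..s, gg δ t := by
      rw [← intervalIntegral.integral_const_mul, ← intervalIntegral.integral_add
        (lin_gg_ii δ hδ s 0 s) ((gg_ii δ hδ 0 s).const_mul _)]
      congr 1; funext t; ring
    rw [h1, h2, smul_eq_mul]
    show _ + _ - FF δ s - _ = _
    unfold FF GG
    ring
  have bound : ∀ x : ℝ, ‖FF δ x - FF δ s - (x - s) • GG δ s‖ ≤ M * ‖(x - s) * (x - s)‖ := by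
    intro x
    rw [key x]
    have : ∀ t ∈ Set.uIoc s x, ‖(x - t) * gg δ t‖ ≤ |x - s| * M := by
      intro t ht
      rw [norm_mul, Real.norm_eq_abs, Real.norm_eq_abs]
      have h1 : |x - t| ≤ |x - s| := by
        rcases le_total s x with hsx | hsx
        · rw [Set.uIoc_of_le hsx] at ht
          rw [abs_of_nonneg (by linarith [ht.2]), abs_of_nonneg (by linarith)]
          linarith [ht.1]
        · rw [Set.uIoc_of_ge hsx] at ht
          rw [abs_of_nonpos (by linarith [ht.1]), abs_of_nonpos (by linarith)]
          linarith [ht.2]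
      exact mul_le_mul h1 (gg_abs_le δ hδ t) (abs_nonneg _) (abs_nonneg _)
    have hb := intervalIntegral.norm_integral_le_of_norm_le_const this
    rw [Real.norm_eq_abs ((x - s) * (x - s)), abs_mul]
    calc ‖∫ t in s..x, (x - t) * gg δ t‖ ≤ |x - s| * M * |x - s| := hb
      _ = M * (|x - s| * |x - s|) := by ring
  have big : (fun x => FF δ x - FF δ s - (x - s) • GG δ s)
      =O[nhds s] (fun x => (x - s) * (x - s)) :=
    Asymptotics.IsBigO.of_bound M (Filter.Eventually.of_forall bound)
  refine big.trans_isLittleO ?_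
  have h1 : (fun x : ℝ => x - s) =o[nhds s] (fun _ : ℝ => (1:ℝ)) := by
    rw [Asymptotics.isLittleO_one_iff]
    have : Filter.Tendsto (fun x : ℝ => x - s) (nhds s) (nhds (s - s)) :=
      (continuous_id.sub continuous_const).continuousAt
    simpa using this
  have h2 := h1.mul_isBigO (Asymptotics.isBigO_refl (fun x : ℝ => x - s) (nhds s))
  simpa using h2

noncomputable def WW (δ : ℝ) : ℝ × ℝ → ℝ := fun p =>
  FF δ (p.2 + p.1) + FF δ (p.2 - p.1) - (1 / 2) * FF δ (2 * p.1) - (1 / 2) * p.2 ^ 2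

section FD
variable (δ : ℝ)

lemma hadd (p : ℝ × ℝ) : HasFDerivAt (fun q : ℝ × ℝ => q.2 + q.1)
    (ContinuousLinearMap.snd ℝ ℝ ℝ + ContinuousLinearMap.fst ℝ ℝ ℝ) p :=
  hasFDerivAt_snd.add hasFDerivAt_fst

lemma hsub (p : ℝ × ℝ) : HasFDerivAt (fun q : ℝ × ℝ => q.2 - q.1)
    (ContinuousLinearMap.snd ℝ ℝ ℝ - ContinuousLinearMap.fst ℝ ℝ ℝ) p :=
  hasFDerivAt_snd.sub hasFDerivAt_fst

lemma hdbl (p : ℝ × ℝ) : HasFDerivAt (fun q : ℝ × ℝ => 2 * q.1)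
    ((2 : ℝ) • ContinuousLinearMap.fst ℝ ℝ ℝ) p :=
  hasFDerivAt_fst.const_mul (2 : ℝ)

lemma WW_hasFDerivAt (hδ : 0 < δ) (p : ℝ × ℝ) :
    HasFDerivAt (WW δ)
      ((GG δ (p.2 + p.1)) • (ContinuousLinearMap.snd ℝ ℝ ℝ + ContinuousLinearMap.fst ℝ ℝ ℝ)
        + (GG δ (p.2 - p.1)) • (ContinuousLinearMap.snd ℝ ℝ ℝ - ContinuousLinearMap.fst ℝ ℝ ℝ)
        - (1 / 2 : ℝ) • ((GG δ (2 * p.1)) • ((2 : ℝ) • ContinuousLinearMap.fst ℝ ℝ ℝ))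
        - ((1 / 2 : ℝ) * (2 * p.2 ^ 1)) • ContinuousLinearMap.snd ℝ ℝ ℝ) p := by
  have hA := (FF_hasDeriv δ hδ (p.2 + p.1)).comp_hasFDerivAt p (hadd p)
  have hB := (FF_hasDeriv δ hδ (p.2 - p.1)).comp_hasFDerivAt p (hsub p)
  have hC := ((FF_hasDeriv δ hδ (2 * p.1)).comp_hasFDerivAt p (hdbl p)).const_mul (1/2 : ℝ)
  have hD : HasDerivAt (fun y : ℝ => (1/2 : ℝ) * y ^ 2) ((1/2 : ℝ) * (2 * p.2 ^ 1)) p.2 :=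
    (hasDerivAt_pow 2 p.2).const_mul (1/2 : ℝ)
  have hD' := hD.comp_hasFDerivAt p (hasFDerivAt_snd (𝕜 := ℝ) (p := p) (E := ℝ) (F := ℝ))
  have hC' : HasFDerivAt (fun q : ℝ × ℝ => (1/2 : ℝ) * FF δ (2 * q.1))
      ((1/2 : ℝ) • ((GG δ (2 * p.1)) • ((2 : ℝ) • ContinuousLinearMap.fst ℝ ℝ ℝ))) p := hC
  exact ((hA.add hB).sub hC').sub hD'

lemma pdx_WW (hδ : 0 < δ) (p : ℝ × ℝ) :
    pdx (WW δ) p = GG δ (p.2 + p.1) - GG δ (p.2 - p.1) - GG δ (2 * p.1) := by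
  rw [pdx, (WW_hasFDerivAt δ hδ p).fderiv]
  simp [ContinuousLinearMap.add_apply, ContinuousLinearMap.sub_apply,
    ContinuousLinearMap.smul_apply, smul_eq_mul]
  try ring

lemma pdy_WW (hδ : 0 < δ) (p : ℝ × ℝ) :
    pdy (WW δ) p = GG δ (p.2 + p.1) + GG δ (p.2 - p.1) - p.2 := by
  rw [pdy, (WW_hasFDerivAt δ hδ p).fderiv]
  simp [ContinuousLinearMap.add_apply, ContinuousLinearMap.sub_apply,
    ContinuousLinearMap.smul_apply, smul_eq_mul]
  try ring

end FD

def good (δ s : ℝ) : Prop := ∀ n : ℤ, |s - (n : ℝ)| ≠ δ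

lemma pdxx_WW (δ : ℝ) (hδ : 0 < δ) (p : ℝ × ℝ) (h1 : good δ (p.2 + p.1))
    (h2 : good δ (p.2 - p.1)) (h3 : good δ (2 * p.1)) :
    pdx (pdx (WW δ)) p
      = gg δ (p.2 + p.1) + gg δ (p.2 - p.1) - 2 * gg δ (2 * p.1) := by
  have hfun : pdx (WW δ)
      = fun q : ℝ × ℝ => GG δ (q.2 + q.1) - GG δ (q.2 - q.1) - GG δ (2 * q.1) :=
    funext (pdx_WW δ hδ)
  rw [hfun]
  have hA := (GG_hasDeriv δ hδ (p.2 + p.1) h1).comp_hasFDerivAt p (hadd p)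
  have hB := (GG_hasDeriv δ hδ (p.2 - p.1) h2).comp_hasFDerivAt p (hsub p)
  have hC := (GG_hasDeriv δ hδ (2 * p.1) h3).comp_hasFDerivAt p (hdbl p)
  have hP : HasFDerivAt
      (fun q : ℝ × ℝ => GG δ (q.2 + q.1) - GG δ (q.2 - q.1) - GG δ (2 * q.1))
      (gg δ (p.2 + p.1) • (ContinuousLinearMap.snd ℝ ℝ ℝ + ContinuousLinearMap.fst ℝ ℝ ℝ) -
        gg δ (p.2 - p.1) • (ContinuousLinearMap.snd ℝ ℝ ℝ - ContinuousLinearMap.fst ℝ ℝ ℝ) -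
        gg δ (2 * p.1) • (2:ℝ) • ContinuousLinearMap.fst ℝ ℝ ℝ) p := (hA.sub hB).sub hC
  rw [pdx, hP.fderiv]
  simp [ContinuousLinearMap.add_apply, ContinuousLinearMap.sub_apply,
    ContinuousLinearMap.smul_apply, smul_eq_mul]
  ring

lemma pdxy_WW (δ : ℝ) (hδ : 0 < δ) (p : ℝ × ℝ) (h1 : good δ (p.2 + p.1))
    (h2 : good δ (p.2 - p.1)) :
    pdx (pdy (WW δ)) p = gg δ (p.2 + p.1) - gg δ (p.2 - p.1) := by
  have hfun : pdy (WW δ)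
      = fun q : ℝ × ℝ => GG δ (q.2 + q.1) + GG δ (q.2 - q.1) - q.2 :=
    funext (pdy_WW δ hδ)
  rw [hfun]
  have hA := (GG_hasDeriv δ hδ (p.2 + p.1) h1).comp_hasFDerivAt p (hadd p)
  have hB := (GG_hasDeriv δ hδ (p.2 - p.1) h2).comp_hasFDerivAt p (hsub p)
  have hP : HasFDerivAt
      (fun q : ℝ × ℝ => GG δ (q.2 + q.1) + GG δ (q.2 - q.1) - q.2)
      (gg δ (p.2 + p.1) • (ContinuousLinearMap.snd ℝ ℝ ℝ + ContinuousLinearMap.fst ℝ ℝ ℝ) +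
        gg δ (p.2 - p.1) • (ContinuousLinearMap.snd ℝ ℝ ℝ - ContinuousLinearMap.fst ℝ ℝ ℝ) -
        ContinuousLinearMap.snd ℝ ℝ ℝ) p :=
    (hA.add hB).sub (hasFDerivAt_snd (𝕜 := ℝ) (p := p) (E := ℝ) (F := ℝ))
  rw [pdx, hP.fderiv]
  simp [ContinuousLinearMap.add_apply, ContinuousLinearMap.sub_apply,
    ContinuousLinearMap.smul_apply, smul_eq_mul]
  try ring

lemma pdyy_WW (δ : ℝ) (hδ : 0 < δ) (p : ℝ × ℝ) (h1 : good δ (p.2 + p.1))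
    (h2 : good δ (p.2 - p.1)) :
    pdy (pdy (WW δ)) p = gg δ (p.2 + p.1) + gg δ (p.2 - p.1) - 1 := by
  have hfun : pdy (WW δ)
      = fun q : ℝ × ℝ => GG δ (q.2 + q.1) + GG δ (q.2 - q.1) - q.2 :=
    funext (pdy_WW δ hδ)
  rw [hfun]
  have hA := (GG_hasDeriv δ hδ (p.2 + p.1) h1).comp_hasFDerivAt p (hadd p)
  have hB := (GG_hasDeriv δ hδ (p.2 - p.1) h2).comp_hasFDerivAt p (hsub p)
  have hP : HasFDerivAt
      (fun q : ℝ × ℝ => GG δ (q.2 + q.1) + GG δ (q.2 - q.1) - q.2)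
      (gg δ (p.2 + p.1) • (ContinuousLinearMap.snd ℝ ℝ ℝ + ContinuousLinearMap.fst ℝ ℝ ℝ) +
        gg δ (p.2 - p.1) • (ContinuousLinearMap.snd ℝ ℝ ℝ - ContinuousLinearMap.fst ℝ ℝ ℝ) -
        ContinuousLinearMap.snd ℝ ℝ ℝ) p :=
    (hA.add hB).sub (hasFDerivAt_snd (𝕜 := ℝ) (p := p) (E := ℝ) (F := ℝ))
  rw [pdy, hP.fderiv]
  simp [ContinuousLinearMap.add_apply, ContinuousLinearMap.sub_apply,
    ContinuousLinearMap.smul_apply, smul_eq_mul]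
  try ring

lemma integrand_eq (δ : ℝ) (hδ : 0 < δ) (p : ℝ × ℝ) (h1 : good δ (p.2 + p.1))
    (h2 : good δ (p.2 - p.1)) (h3 : good δ (2 * p.1)) :
    pdx (pdx (WW δ)) p * pdy (pdy (WW δ)) p - (pdx (pdy (WW δ)) p) ^ 2
        + pdx (pdx (WW δ)) p
      = 4 * (gg δ (p.2 + p.1) * gg δ (p.2 - p.1))
        - 2 * (gg δ (2 * p.1) * gg δ (p.2 + p.1))
        - 2 * (gg δ (2 * p.1) * gg δ (p.2 - p.1)) := by
  rw [pdxx_WW δ hδ p h1 h2 h3, pdxy_WW δ hδ p h1 h2, pdyy_WW δ hδ p h1 h2]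
  ring

def badset (δ : ℝ) : Set ℝ := {s | ∃ n : ℤ, |s - (n : ℝ)| = δ}

lemma badset_countable (δ : ℝ) : (badset δ).Countable := by
  have : badset δ ⊆ ⋃ n : ℤ, {(n : ℝ) + δ, (n : ℝ) - δ} := by
    rintro s ⟨n, hn⟩
    have hδ0 : 0 ≤ δ := hn ▸ abs_nonneg (s - (n:ℝ))
    rcases (abs_eq hδ0).mp hn with h | h
    · exact Set.mem_iUnion.2 ⟨n, Or.inl (by linarith)⟩
    · exact Set.mem_iUnion.2 ⟨n, Or.inr (by simp; linarith)⟩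
  exact Set.Countable.mono this
    (Set.countable_iUnion fun n => ((Set.finite_singleton _).insert _).countable)

lemma not_good_iff (δ s : ℝ) : ¬ good δ s ↔ s ∈ badset δ := by
  unfold good badset; push_neg; rfl

lemma null_line_add (c : ℝ) : volume {p : ℝ × ℝ | p.2 + p.1 = c} = 0 := by
  have hmeas : MeasurableSet {p : ℝ × ℝ | p.2 + p.1 = c} :=
    (isClosed_eq (by fun_prop) continuous_const).measurableSet
  rw [Measure.volume_eq_prod, Measure.prod_apply hmeas]
  have h0 : ∀ x : ℝ, (volume {a : ℝ | a + x = c}) = 0 := by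
    intro x
    have : {a : ℝ | a + x = c} = {c - x} := by
      ext y; simp; constructor <;> intro h <;> linarith
    rw [this]; exact measure_singleton _
  simp only [Set.preimage_setOf_eq, h0, lintegral_zero]

lemma null_line_sub (c : ℝ) : volume {p : ℝ × ℝ | p.2 - p.1 = c} = 0 := by
  have hmeas : MeasurableSet {p : ℝ × ℝ | p.2 - p.1 = c} :=
    (isClosed_eq (by fun_prop) continuous_const).measurableSet
  rw [Measure.volume_eq_prod, Measure.prod_apply hmeas]
  have h0 : ∀ x : ℝ, (volume {a : ℝ | a - x = c}) = 0 := by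
    intro x
    have : {a : ℝ | a - x = c} = {c + x} := by
      ext y; simp; constructor <;> intro h <;> linarith
    rw [this]; exact measure_singleton _
  simp only [Set.preimage_setOf_eq, h0, lintegral_zero]

lemma null_line_vert (c : ℝ) : volume {p : ℝ × ℝ | 2 * p.1 = c} = 0 := by
  have : {p : ℝ × ℝ | 2 * p.1 = c} = {x : ℝ | 2 * x = c} ×ˢ Set.univ := by
    ext p; simp [Set.mem_prod]
  rw [this, Measure.volume_eq_prod, Measure.prod_prod]
  have : {x : ℝ | 2 * x = c} = {c / 2} := by
    ext x; simp; constructor <;> intro h <;> linarith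
  rw [this, Real.volume_singleton, zero_mul]

lemma null_N (δ : ℝ) :
    volume {p : ℝ × ℝ | ¬ (good δ (p.2 + p.1) ∧ good δ (p.2 - p.1) ∧ good δ (2 * p.1))} = 0 := by
  have hsub : {p : ℝ × ℝ | ¬ (good δ (p.2 + p.1) ∧ good δ (p.2 - p.1) ∧ good δ (2 * p.1))}
      ⊆ (⋃ c ∈ badset δ, {p : ℝ × ℝ | p.2 + p.1 = c})
        ∪ (⋃ c ∈ badset δ, {p : ℝ × ℝ | p.2 - p.1 = c})
        ∪ (⋃ c ∈ badset δ, {p : ℝ × ℝ | 2 * p.1 = c}) := by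
    intro p hp
    simp only [Set.mem_setOf_eq, not_and_or] at hp
    rcases hp with h | h | h
    · rw [not_good_iff] at h
      exact Or.inl (Or.inl (Set.mem_biUnion h rfl))
    · rw [not_good_iff] at h
      exact Or.inl (Or.inr (Set.mem_biUnion h rfl))
    · rw [not_good_iff] at h
      exact Or.inr (Set.mem_biUnion h rfl)
  refine measure_mono_null hsub ?_
  have hc := badset_countable δ
  refine measure_union_null (measure_union_null ?_ ?_) ?_
  · exact (measure_biUnion_null_iff hc).2 fun c _ => null_line_add c
  · exact (measure_biUnion_null_iff hc).2 fun c _ => null_line_sub c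
  · exact (measure_biUnion_null_iff hc).2 fun c _ => null_line_vert c

noncomputable def nice (δ : ℝ) : ℝ × ℝ → ℝ := fun p =>
  4 * (gg δ (p.2 + p.1) * gg δ (p.2 - p.1))
    - 2 * (gg δ (2 * p.1) * gg δ (p.2 + p.1))
    - 2 * (gg δ (2 * p.1) * gg δ (p.2 - p.1))

lemma nice_meas (δ : ℝ) : Measurable (nice δ) := by
  have h1 : Measurable fun p : ℝ × ℝ => gg δ (p.2 + p.1) :=
    (gg_meas δ).comp (by fun_prop)
  have h2 : Measurable fun p : ℝ × ℝ => gg δ (p.2 - p.1) :=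
    (gg_meas δ).comp (by fun_prop)
  have h3 : Measurable fun p : ℝ × ℝ => gg δ (2 * p.1) :=
    (gg_meas δ).comp (by fun_prop)
  unfold nice
  fun_prop

lemma nice_bound (δ : ℝ) (hδ : 0 < δ) (p : ℝ × ℝ) :
    ‖nice δ p‖ ≤ 8 * (1 / (4 * δ)) ^ 2 := by
  have b1 := gg_abs_le δ hδ (p.2 + p.1)
  have b2 := gg_abs_le δ hδ (p.2 - p.1)
  have b3 := gg_abs_le δ hδ (2 * p.1)
  have n1 := abs_nonneg (gg δ (p.2 + p.1))
  have n2 := abs_nonneg (gg δ (p.2 - p.1))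
  have n3 := abs_nonneg (gg δ (2 * p.1))
  rw [Real.norm_eq_abs]
  unfold nice
  have habs : ∀ a b : ℝ, |a * b| = |a| * |b| := fun a b => abs_mul a b
  calc |4 * (gg δ (p.2 + p.1) * gg δ (p.2 - p.1))
      - 2 * (gg δ (2 * p.1) * gg δ (p.2 + p.1))
      - 2 * (gg δ (2 * p.1) * gg δ (p.2 - p.1))|
      ≤ |4 * (gg δ (p.2 + p.1) * gg δ (p.2 - p.1))|
        + |2 * (gg δ (2 * p.1) * gg δ (p.2 + p.1))|
        + |2 * (gg δ (2 * p.1) * gg δ (p.2 - p.1))| := by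
        have := abs_sub (4 * (gg δ (p.2 + p.1) * gg δ (p.2 - p.1))
          - 2 * (gg δ (2 * p.1) * gg δ (p.2 + p.1)))
          (2 * (gg δ (2 * p.1) * gg δ (p.2 - p.1)))
        calc _ ≤ |4 * (gg δ (p.2 + p.1) * gg δ (p.2 - p.1))
              - 2 * (gg δ (2 * p.1) * gg δ (p.2 + p.1))|
            + |2 * (gg δ (2 * p.1) * gg δ (p.2 - p.1))| := abs_sub _ _
          _ ≤ _ := by
              have := abs_sub (4 * (gg δ (p.2 + p.1) * gg δ (p.2 - p.1)))
                (2 * (gg δ (2 * p.1) * gg δ (p.2 + p.1)))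
              linarith
    _ ≤ 4 * ((1/(4*δ)) * (1/(4*δ))) + 2 * ((1/(4*δ)) * (1/(4*δ)))
        + 2 * ((1/(4*δ)) * (1/(4*δ))) := by
        rw [abs_mul, abs_mul, abs_mul, abs_mul, abs_mul, abs_mul]
        have h4 : |(4:ℝ)| = 4 := by norm_num
        have h2' : |(2:ℝ)| = 2 := by norm_num
        rw [h4, h2']
        have hM : (0:ℝ) ≤ 1/(4*δ) := by positivity
        gcongr
    _ = 8 * (1 / (4 * δ)) ^ 2 := by ring

lemma int_gg_shift (δ : ℝ) (hδ : 0 < δ) (hδ' : δ < 1/2) (c : ℝ) :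
    ∫ y in (-(1:ℝ)/2)..(1/2 : ℝ), gg δ (y + c) = 1/2 := by
  rw [intervalIntegral.integral_comp_add_right (fun s => gg δ s) c,
    show (1:ℝ)/2 + c = (-(1:ℝ)/2 + c) + 1 by ring]
  exact int_gg_period δ hδ hδ' _

lemma gg_comp_ii (δ : ℝ) (hδ : 0 < δ) (c : ℝ) (a b : ℝ) :
    IntervalIntegrable (fun y => gg δ (y + c)) volume a b :=
  bdd_intervalIntegrable _ ((gg_meas δ).comp (by fun_prop)) _
    (fun s => gg_abs_le δ hδ (s + c)) a b

noncomputable def HH (δ : ℝ) : ℝ → ℝ := fun τ => ∫ u in (-(1:ℝ)/2)..(1/2 : ℝ), gg δ (u + τ) * gg δ u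

lemma HH_per (δ : ℝ) : Function.Periodic (HH δ) 1 := by
  intro τ
  unfold HH
  congr 1
  funext u
  rw [show u + (τ + 1) = (u + τ) + 1 by ring, gg_per δ (u + τ)]

lemma HH_meas (δ : ℝ) : Measurable (HH δ) := by
  have : HH δ = fun τ => ∫ u in Set.Ioc (-(1:ℝ)/2) (1/2 : ℝ), gg δ (u + τ) * gg δ u := by
    funext τ
    unfold HH
    rw [intervalIntegral.integral_of_le (by norm_num)]
  rw [this]
  have hsm : MeasureTheory.StronglyMeasurable
      (Function.uncurry fun (τ : ℝ) (u : ℝ) => gg δ (u + τ) * gg δ u) := by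
    apply Measurable.stronglyMeasurable
    apply Measurable.mul
    · exact (gg_meas δ).comp (by fun_prop)
    · exact (gg_meas δ).comp (by fun_prop)
  exact (hsm.integral_prod_right (ν := volume.restrict (Set.Ioc (-(1:ℝ)/2) (1/2:ℝ)))).measurable

lemma HH_bound (δ : ℝ) (hδ : 0 < δ) (τ : ℝ) : ‖HH δ τ‖ ≤ (1/(4*δ))^2 := by
  unfold HH
  have h : ∀ u ∈ Set.uIoc (-(1:ℝ)/2) (1/2 : ℝ), ‖gg δ (u + τ) * gg δ u‖ ≤ (1/(4*δ))^2 := by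
    intro u _
    rw [norm_mul, Real.norm_eq_abs, Real.norm_eq_abs, sq]
    exact mul_le_mul (gg_abs_le δ hδ _) (gg_abs_le δ hδ _) (abs_nonneg _) (by positivity)
  have := intervalIntegral.norm_integral_le_of_norm_le_const h
  calc ‖∫ u in (-(1:ℝ)/2)..(1/2:ℝ), gg δ (u + τ) * gg δ u‖
      ≤ (1/(4*δ))^2 * |(1:ℝ)/2 - (-(1:ℝ)/2)| := this
    _ = (1/(4*δ))^2 := by norm_num

lemma HH_ii (δ : ℝ) (hδ : 0 < δ) (a b : ℝ) :
    IntervalIntegrable (fun x => HH δ (2 * x)) volume a b := by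
  apply bdd_intervalIntegrable _ ((HH_meas δ).comp (by fun_prop)) ((1/(4*δ))^2)
  intro s
  have := HH_bound δ hδ (2 * s)
  rwa [Real.norm_eq_abs] at this

lemma gg_dbl_ii (δ : ℝ) (hδ : 0 < δ) (a b : ℝ) :
    IntervalIntegrable (fun x => gg δ (2 * x)) volume a b :=
  bdd_intervalIntegrable _ ((gg_meas δ).comp (by fun_prop)) _
    (fun s => gg_abs_le δ hδ (2 * s)) a b

lemma conv_eq_HH (δ : ℝ) (hδ : 0 < δ) (x : ℝ) :
    ∫ y in (-(1:ℝ)/2)..(1/2 : ℝ), gg δ (y + x) * gg δ (y - x) = HH δ (2 * x) := by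
  have e : (fun y => gg δ (y + x) * gg δ (y - x))
      = fun y => (fun u => gg δ (u + 2 * x) * gg δ u) (y + (-x)) := by
    funext y
    simp only []
    rw [show y + -x + 2 * x = y + x by ring, show y + -x = y - x by ring]
  rw [e, intervalIntegral.integral_comp_add_right (fun u => gg δ (u + 2*x) * gg δ u) (-x)]
  have kper : Function.Periodic (fun u => gg δ (u + 2 * x) * gg δ u) 1 := by
    intro u
    simp only []
    rw [show u + 1 + 2 * x = (u + 2 * x) + 1 by ring, gg_per δ (u + 2*x), gg_per δ u]
  rw [show (1:ℝ)/2 + -x = (-(1:ℝ)/2 + -x) + 1 by ring,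
    Function.Periodic.intervalIntegral_add_eq kper (-(1:ℝ)/2 + -x) (-(1:ℝ)/2),
    show -(1:ℝ)/2 + 1 = 1/2 by norm_num]
  rfl

lemma prod_ii (δ : ℝ) (hδ : 0 < δ) (x a b : ℝ) :
    IntervalIntegrable (fun y => gg δ (y + x) * gg δ (y - x)) volume a b := by
  apply bdd_intervalIntegrable _ (((gg_meas δ).comp (by fun_prop)).mul
    (((gg_meas δ).comp (by fun_prop)))) ((1/(4*δ))^2)
  intro s
  show |gg δ (s + x) * gg δ (s - x)| ≤ _
  rw [abs_mul, sq]
  exact mul_le_mul (gg_abs_le δ hδ _) (gg_abs_le δ hδ _) (abs_nonneg _) (by positivity)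

lemma inner_int (δ : ℝ) (hδ : 0 < δ) (hδ' : δ < 1/2) (x : ℝ) :
    ∫ y in Set.Icc (-(1:ℝ)/2) (1/2 : ℝ), nice δ (x, y)
      = 4 * HH δ (2 * x) - 2 * gg δ (2 * x) := by
  rw [MeasureTheory.integral_Icc_eq_integral_Ioc,
    ← intervalIntegral.integral_of_le (by norm_num : (-(1:ℝ)/2) ≤ 1/2)]
  have e : (fun y => nice δ (x, y)) = fun y =>
      4 * (gg δ (y + x) * gg δ (y - x)) - (2 * gg δ (2 * x)) * gg δ (y + x)
        - (2 * gg δ (2 * x)) * gg δ (y - x) := by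
    funext y; unfold nice; simp only []; ring
  have h1 : IntervalIntegrable (fun y => 4 * (gg δ (y + x) * gg δ (y - x)))
      volume (-(1:ℝ)/2) (1/2) := (prod_ii δ hδ x _ _).const_mul 4
  have h2 : IntervalIntegrable (fun y => (2 * gg δ (2 * x)) * gg δ (y + x))
      volume (-(1:ℝ)/2) (1/2) := (gg_comp_ii δ hδ x _ _).const_mul _
  have h3 : IntervalIntegrable (fun y => (2 * gg δ (2 * x)) * gg δ (y - x))
      volume (-(1:ℝ)/2) (1/2) := by
    have := (gg_comp_ii δ hδ (-x) _ _).const_mul (2 * gg δ (2 * x))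
      (a := -(1:ℝ)/2) (b := 1/2)
    have e2 : (fun y => (2 * gg δ (2*x)) * gg δ (y + -x))
        = fun y => (2 * gg δ (2*x)) * gg δ (y - x) := by
      funext y; rw [show y + -x = y - x by ring]
    rwa [e2] at this
  calc ∫ y in (-(1:ℝ)/2)..(1/2:ℝ), nice δ (x, y)
      = ∫ y in (-(1:ℝ)/2)..(1/2:ℝ),
          (4 * (gg δ (y + x) * gg δ (y - x)) - (2 * gg δ (2 * x)) * gg δ (y + x)
            - (2 * gg δ (2 * x)) * gg δ (y - x)) := by rw [← e]
    _ = (∫ y in (-(1:ℝ)/2)..(1/2:ℝ), 4 * (gg δ (y + x) * gg δ (y - x)))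
        - (∫ y in (-(1:ℝ)/2)..(1/2:ℝ), (2 * gg δ (2 * x)) * gg δ (y + x))
        - (∫ y in (-(1:ℝ)/2)..(1/2:ℝ), (2 * gg δ (2 * x)) * gg δ (y - x)) := by
        rw [intervalIntegral.integral_sub (h1.sub h2) h3, intervalIntegral.integral_sub h1 h2]
    _ = 4 * HH δ (2 * x) - (2 * gg δ (2 * x)) * (1/2) - (2 * gg δ (2 * x)) * (1/2) := by
        rw [intervalIntegral.integral_const_mul, intervalIntegral.integral_const_mul,
          intervalIntegral.integral_const_mul, conv_eq_HH δ hδ x, int_gg_shift δ hδ hδ' x]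
        have e3 : (fun y => gg δ (y - x)) = fun y => gg δ (y + -x) := by
          funext y; rw [show y + -x = y - x by ring]
        rw [e3, int_gg_shift δ hδ hδ' (-x)]
    _ = 4 * HH δ (2 * x) - 2 * gg δ (2 * x) := by ring

lemma int_HH (δ : ℝ) (hδ : 0 < δ) (hδ' : δ < 1/2) :
    ∫ τ in (-(1:ℝ)/2)..(1/2 : ℝ), HH δ τ = 1/4 := by
  set T : Set ℝ := Set.Ioc (-(1:ℝ)/2) (1/2 : ℝ) with hT
  rw [intervalIntegral.integral_of_le (by norm_num : (-(1:ℝ)/2) ≤ 1/2)]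
  have hHH : ∀ τ, HH δ τ = ∫ u in T, gg δ (u + τ) * gg δ u := by
    intro τ
    unfold HH
    rw [intervalIntegral.integral_of_le (by norm_num : (-(1:ℝ)/2) ≤ 1/2)]
  rw [setIntegral_congr_fun measurableSet_Ioc (fun τ _ => hHH τ)]
  have hm : Measurable (Function.uncurry fun (τ : ℝ) (u : ℝ) => gg δ (u + τ) * gg δ u) := by
    exact ((gg_meas δ).comp (measurable_snd.add measurable_fst)).mul
      ((gg_meas δ).comp measurable_snd)
  have hint : Integrable (Function.uncurry fun (τ : ℝ) (u : ℝ) => gg δ (u + τ) * gg δ u)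
      ((volume.restrict T).prod (volume.restrict T)) := by
    rw [← integrableOn_univ]
    apply Measure.integrableOn_of_bounded (M := (1/(4*δ))^2)
    case s_finite =>
      rw [← Set.univ_prod_univ, Measure.prod_prod, Measure.restrict_apply_univ]
      exact (ENNReal.mul_lt_top measure_Ioc_lt_top measure_Ioc_lt_top).ne
    case f_mble => exact hm.aestronglyMeasurable
    case f_bdd =>
      refine Filter.Eventually.of_forall fun p => ?_
      rw [Function.uncurry, Real.norm_eq_abs, abs_mul, sq]
      exact mul_le_mul (gg_abs_le δ hδ _) (gg_abs_le δ hδ _) (abs_nonneg _) (by positivity)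
  rw [MeasureTheory.integral_integral_swap hint]
  have hinner : ∀ u : ℝ, (∫ τ in T, gg δ (u + τ) * gg δ u) = (1/2) * gg δ u := by
    intro u
    rw [MeasureTheory.integral_mul_const]
    congr 1
    rw [hT, ← intervalIntegral.integral_of_le (by norm_num : (-(1:ℝ)/2) ≤ 1/2)]
    have e : (fun τ => gg δ (u + τ)) = fun τ => gg δ (τ + u) := by
      funext τ; rw [add_comm]
    rw [e]
    exact int_gg_shift δ hδ hδ' u
  rw [setIntegral_congr_fun measurableSet_Ioc (fun u _ => hinner u),
    MeasureTheory.integral_const_mul,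
    ← intervalIntegral.integral_of_le (by norm_num : (-(1:ℝ)/2) ≤ 1/2),
    int_gg_base δ hδ hδ']
  norm_num

lemma HH_plain_ii (δ : ℝ) (hδ : 0 < δ) (a b : ℝ) :
    IntervalIntegrable (HH δ) volume a b := by
  apply bdd_intervalIntegrable _ (HH_meas δ) ((1/(4*δ))^2)
  intro s
  have := HH_bound δ hδ s
  rwa [Real.norm_eq_abs] at this

lemma int_HH_period (δ : ℝ) (hδ : 0 < δ) (hδ' : δ < 1/2) (a : ℝ) :
    ∫ τ in a..(a+1), HH δ τ = 1/4 := by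
  rw [Function.Periodic.intervalIntegral_add_eq (HH_per δ) a (-(1:ℝ)/2),
    show (-(1:ℝ)/2 + 1) = 1/2 by norm_num]
  exact int_HH δ hδ hδ'

lemma outer_int (δ : ℝ) (hδ : 0 < δ) (hδ' : δ < 1/2) :
    ∫ x in Set.Icc (-(1:ℝ)/2) (1/2 : ℝ), (4 * HH δ (2 * x) - 2 * gg δ (2 * x)) = 0 := by
  rw [MeasureTheory.integral_Icc_eq_integral_Ioc,
    ← intervalIntegral.integral_of_le (by norm_num : (-(1:ℝ)/2) ≤ 1/2)]
  have h1 : IntervalIntegrable (fun x => 4 * HH δ (2 * x)) volume (-(1:ℝ)/2) (1/2) :=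
    (HH_ii δ hδ _ _).const_mul 4
  have h2 : IntervalIntegrable (fun x => 2 * gg δ (2 * x)) volume (-(1:ℝ)/2) (1/2) :=
    (gg_dbl_ii δ hδ _ _).const_mul 2
  rw [intervalIntegral.integral_sub h1 h2, intervalIntegral.integral_const_mul,
    intervalIntegral.integral_const_mul]
  have hgg2 : ∫ x in (-(1:ℝ)/2)..(1/2:ℝ), gg δ (2 * x) = 1/2 := by
    rw [intervalIntegral.integral_comp_mul_left (gg δ) (by norm_num : (2:ℝ) ≠ 0)]
    rw [show (2:ℝ) * (-(1:ℝ)/2) = -1 by norm_num, show (2:ℝ) * ((1:ℝ)/2) = 1 by norm_num]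
    have hsplit := intervalIntegral.integral_add_adjacent_intervals
      (gg_ii δ hδ (-1) 0) (gg_ii δ hδ 0 1)
    have ha : ∫ s in (-1:ℝ)..(0:ℝ), gg δ s = 1/2 := by
      have := int_gg_period δ hδ hδ' (-1)
      norm_num at this
      convert this using 2 <;> norm_num
    have hb : ∫ s in (0:ℝ)..(1:ℝ), gg δ s = 1/2 := by
      have := int_gg_period δ hδ hδ' 0
      norm_num at this
      convert this using 2 <;> norm_num
    rw [← hsplit, ha, hb]
    norm_num
  have hHH2 : ∫ x in (-(1:ℝ)/2)..(1/2:ℝ), HH δ (2 * x) = 1/4 := by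
    rw [intervalIntegral.integral_comp_mul_left (HH δ) (by norm_num : (2:ℝ) ≠ 0)]
    rw [show (2:ℝ) * (-(1:ℝ)/2) = -1 by norm_num, show (2:ℝ) * ((1:ℝ)/2) = 1 by norm_num]
    have hsplit := intervalIntegral.integral_add_adjacent_intervals
      (HH_plain_ii δ hδ (-1) 0) (HH_plain_ii δ hδ 0 1)
    have ha : ∫ s in (-1:ℝ)..(0:ℝ), HH δ s = 1/4 := by
      have := int_HH_period δ hδ hδ' (-1)
      norm_num at this
      convert this using 2 <;> norm_num
    have hb : ∫ s in (0:ℝ)..(1:ℝ), HH δ s = 1/4 := by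
      have := int_HH_period δ hδ hδ' 0
      norm_num at this
      convert this using 2 <;> norm_num
    rw [← hsplit, ha, hb]
    norm_num
  rw [hgg2, hHH2]
  norm_num

/-- for `w_δ(x,y) = f_δ(y+x) + f_δ(y-x) - ½f_δ(2x) - ½y²`, the
integral over the period cell `[-1/2,1/2]²` of `[w_δ,w_δ] + (w_δ)_xx` vanishes,
where `[w,w] = w_xx w_yy - w_xy²`. -/
theorem stmt_7 (δ : ℝ) (hδ : 0 < δ) (hδ' : δ < 1 / 2) :
    let f'' : ℝ → ℝ := fun s => if ∃ n : ℤ, |s - (n : ℝ)| < δ then 1 / (4 * δ) else 0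
    let f : ℝ → ℝ := fun s => ∫ t in (0 : ℝ)..s, (s - t) * f'' t
    let w : ℝ × ℝ → ℝ := fun p =>
      f (p.2 + p.1) + f (p.2 - p.1) - (1 / 2) * f (2 * p.1) - (1 / 2) * p.2 ^ 2
    (∫ p in (Set.Icc (-(1 : ℝ) / 2) (1 / 2) ×ˢ Set.Icc (-(1 : ℝ) / 2) (1 / 2)),
      ((pdx (pdx w) p * pdy (pdy w) p - (pdx (pdy w) p) ^ 2) + pdx (pdx w) p)) = 0 := by
  show (∫ p in (Set.Icc (-(1 : ℝ) / 2) (1 / 2) ×ˢ Set.Icc (-(1 : ℝ) / 2) (1 / 2)),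
      ((pdx (pdx (WW δ)) p * pdy (pdy (WW δ)) p - (pdx (pdy (WW δ)) p) ^ 2)
        + pdx (pdx (WW δ)) p)) = 0
  set S : Set (ℝ × ℝ) := Set.Icc (-(1 : ℝ) / 2) (1 / 2) ×ˢ Set.Icc (-(1 : ℝ) / 2) (1 / 2)
    with hS
  have hmeasS : MeasurableSet S := measurableSet_Icc.prod measurableSet_Icc
  have step1 : (∫ p in S,
      ((pdx (pdx (WW δ)) p * pdy (pdy (WW δ)) p - (pdx (pdy (WW δ)) p) ^ 2)
        + pdx (pdx (WW δ)) p)) = ∫ p in S, nice δ p := by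
    apply setIntegral_congr_ae hmeasS
    have hae : ∀ᵐ p : ℝ × ℝ,
        p ∉ {p : ℝ × ℝ | ¬ (good δ (p.2 + p.1) ∧ good δ (p.2 - p.1) ∧ good δ (2 * p.1))} :=
      measure_eq_zero_iff_ae_notMem.mp (null_N δ)
    filter_upwards [hae] with p hp _
    rw [not_not] at hp
    exact integrand_eq δ hδ p hp.1 hp.2.1 hp.2.2
  rw [step1]
  have hni : IntegrableOn (nice δ) S (volume.prod volume) := by
    apply Measure.integrableOn_of_bounded (M := 8 * (1/(4*δ))^2)
    case s_finite =>
      rw [hS, Measure.prod_prod]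
      exact (ENNReal.mul_lt_top measure_Icc_lt_top measure_Icc_lt_top).ne
    case f_mble => exact (nice_meas δ).aestronglyMeasurable
    case f_bdd => exact Filter.Eventually.of_forall (nice_bound δ hδ)
  rw [Measure.volume_eq_prod, hS, MeasureTheory.setIntegral_prod _ (hS ▸ hni)]
  rw [setIntegral_congr_fun measurableSet_Icc
    (fun x _ => inner_int δ hδ hδ' x)]
  exact outer_int δ hδ hδ'
end

section
/- Let σ be a smooth symmetric 2×2-tensor field on Ω = [0,L]×[0,2πR], periodic in y, satisfying σ₁₁,x + σ₁₂,y = 0, σ₁₂,x + σ₂₂,y = 0, with σ₁₂ = 0 at x = 0 and x = L, and ∫_Ω σ₂₂ = 0. Then there exists a function φ on Ω, periodic in y, such that σ₁₁ - (1/|Ω|)∫_Ω σ₁₁ = φ_yy, σ₁₂ = -φ_xy, σ₂₂ = φ_xx, and moreover φ_x = 0 at x = 0 and x = L. -/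
open MeasureTheory
open intervalIntegral Set


namespace Stmt14Aux

noncomputable def e1 : ℝ × ℝ →L[ℝ] ℝ := ContinuousLinearMap.fst ℝ ℝ ℝ
noncomputable def e2 : ℝ × ℝ →L[ℝ] ℝ := ContinuousLinearMap.snd ℝ ℝ ℝ

lemma clm_eval (a b : ℝ) (v : ℝ × ℝ) : (a • e1 + b • e2) v = a * v.1 + b * v.2 := by
  simp [e1, e2]

lemma clm_ext2 {L L' : ℝ × ℝ →L[ℝ] ℝ} (h1 : L (1,0) = L' (1,0)) (h2 : L (0,1) = L' (0,1)) :
    L = L' := by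
  refine ContinuousLinearMap.ext fun v => ?_
  have key : ∀ (M : ℝ × ℝ →L[ℝ] ℝ) (w : ℝ × ℝ), M w = w.1 * M (1,0) + w.2 * M (0,1) := by
    intro M w
    have h : M w = M (w.1 • ((1:ℝ),(0:ℝ)) + w.2 • ((0:ℝ),(1:ℝ))) := by
      congr 1
      simp [Prod.ext_iff]
    rw [h, map_add, _root_.map_smul, _root_.map_smul, smul_eq_mul, smul_eq_mul]
  rw [key L v, key L' v, h1, h2]

lemma clm_decomp (L : ℝ × ℝ →L[ℝ] ℝ) : L = L (1,0) • e1 + L (0,1) • e2 := by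
  refine clm_ext2 ?_ ?_ <;> simp [clm_eval, e1, e2]

structure IsC1 (f f1 f2 : ℝ × ℝ → ℝ) : Prop where
  cont : Continuous f
  cont1 : Continuous f1
  cont2 : Continuous f2
  hderiv : ∀ p, HasFDerivAt f (f1 p • e1 + f2 p • e2) p

lemma IsC1.pdx_eq {f f1 f2 : ℝ × ℝ → ℝ} (h : IsC1 f f1 f2) (p : ℝ × ℝ) : pdx f p = f1 p := by
  rw [pdx, (h.hderiv p).fderiv, clm_eval]; ring

lemma IsC1.pdy_eq {f f1 f2 : ℝ × ℝ → ℝ} (h : IsC1 f f1 f2) (p : ℝ × ℝ) : pdy f p = f2 p := by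
  rw [pdy, (h.hderiv p).fderiv, clm_eval]; ring

lemma isC1_of_contDiff {f : ℝ × ℝ → ℝ} (hf : ContDiff ℝ (⊤ : ℕ∞) f) : IsC1 f (pdx f) (pdy f) := by
  have hf' : ContDiff ℝ ((⊤ : ℕ∞) : WithTop ℕ∞) f := hf.of_le (by simp)
  have hd : Differentiable ℝ f := hf.differentiable (by simp)
  have hfc : Continuous (fderiv ℝ f) := ((contDiff_infty_iff_fderiv.mp hf').2).continuous
  refine ⟨hf.continuous, ?_, ?_, ?_⟩
  · exact (hfc.clm_apply continuous_const)
  · exact (hfc.clm_apply continuous_const)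
  · intro p
    have := (hd p).hasFDerivAt
    rwa [clm_decomp (fderiv ℝ f p)] at this

-- vertical derivative: t ↦ f (x, t)
lemma IsC1.hasDerivAt_snd {f f1 f2 : ℝ × ℝ → ℝ} (h : IsC1 f f1 f2) (x t : ℝ) :
    HasDerivAt (fun s => f (x, s)) (f2 (x, t)) t := by
  have h1 : HasDerivAt (fun s : ℝ => ((x, s) : ℝ × ℝ)) (0, 1) t :=
    (hasDerivAt_const t x).prodMk (hasDerivAt_id t)
  have := (h.hderiv (x, t)).comp_hasDerivAt t h1
  exact this.congr_deriv (by simp [clm_eval, e1, e2])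

lemma IsC1.hasDerivAt_fst {f f1 f2 : ℝ × ℝ → ℝ} (h : IsC1 f f1 f2) (y t : ℝ) :
    HasDerivAt (fun s => f (s, y)) (f1 (t, y)) t := by
  have h1 : HasDerivAt (fun s : ℝ => ((s, y) : ℝ × ℝ)) (1, 0) t :=
    (hasDerivAt_id t).prodMk (hasDerivAt_const t y)
  have := (h.hderiv (t, y)).comp_hasDerivAt t h1
  exact this.congr_deriv (by simp [clm_eval, e1, e2])

lemma IsC1.ftc_fst {f f1 f2 : ℝ × ℝ → ℝ} (h : IsC1 f f1 f2) (a b y : ℝ) :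
    ∫ t in a..b, f1 (t, y) = f (b, y) - f (a, y) := by
  refine integral_eq_sub_of_hasDerivAt (fun t _ => h.hasDerivAt_fst y t) ?_
  exact (h.cont1.comp (continuous_id.prodMk continuous_const)).intervalIntegrable a b

lemma IsC1.ftc_snd {f f1 f2 : ℝ × ℝ → ℝ} (h : IsC1 f f1 f2) (a b x : ℝ) :
    ∫ t in a..b, f2 (x, t) = f (x, b) - f (x, a) := by
  refine integral_eq_sub_of_hasDerivAt (fun t _ => h.hasDerivAt_snd x t) ?_
  exact (h.cont2.comp (continuous_const.prodMk continuous_id)).intervalIntegrable a b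

lemma IsC1.swap {f f1 f2 : ℝ × ℝ → ℝ} (h : IsC1 f f1 f2) :
    IsC1 (fun q => f (q.2, q.1)) (fun q => f2 (q.2, q.1)) (fun q => f1 (q.2, q.1)) := by
  have hsw : Continuous (fun q : ℝ × ℝ => ((q.2, q.1) : ℝ × ℝ)) :=
    continuous_snd.prodMk continuous_fst
  refine ⟨h.cont.comp hsw, h.cont2.comp hsw, h.cont1.comp hsw, ?_⟩
  intro p
  have hsd : HasFDerivAt (fun q : ℝ × ℝ => ((q.2, q.1) : ℝ × ℝ))
      ((ContinuousLinearMap.snd ℝ ℝ ℝ).prod (ContinuousLinearMap.fst ℝ ℝ ℝ)) p :=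
    ((ContinuousLinearMap.snd ℝ ℝ ℝ).prod (ContinuousLinearMap.fst ℝ ℝ ℝ)).hasFDerivAt
  have := (h.hderiv (p.2, p.1)).comp p hsd
  refine this.congr_fderiv ?_
  refine (clm_ext2 ?_ ?_).symm <;>
    simp [clm_eval, ContinuousLinearMap.comp_apply, e1, e2]

noncomputable def G (f : ℝ × ℝ → ℝ) (p : ℝ × ℝ) : ℝ := ∫ t in (0:ℝ)..p.1, f (t, p.2)

lemma continuous_G {f : ℝ × ℝ → ℝ} (hf : Continuous f) : Continuous (G f) := by
  have : Continuous fun q : (ℝ × ℝ) × ℝ => f (q.2, q.1.2) := by fun_prop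
  exact continuous_parametric_intervalIntegral_of_continuous (f := fun (p : ℝ × ℝ) (t : ℝ) => f (t, p.2)) this continuous_fst


lemma norm_clm_le (a b : ℝ) : ‖a • e1 + b • e2‖ ≤ |a| + |b| := by
  have he1 : ‖e1‖ ≤ 1 := ContinuousLinearMap.norm_fst_le ℝ ℝ ℝ
  have he2 : ‖e2‖ ≤ 1 := ContinuousLinearMap.norm_snd_le ℝ ℝ ℝ
  have h1 : ‖a • e1‖ ≤ |a| := by
    refine le_trans (norm_smul_le a e1) ?_
    rw [Real.norm_eq_abs]
    nlinarith [abs_nonneg a, norm_nonneg e1]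
  have h2 : ‖b • e2‖ ≤ |b| := by
    refine le_trans (norm_smul_le b e2) ?_
    rw [Real.norm_eq_abs]
    nlinarith [abs_nonneg b, norm_nonneg e2]
  calc ‖a • e1 + b • e2‖ ≤ ‖a • e1‖ + ‖b • e2‖ := norm_add_le _ _
    _ ≤ |a| + |b| := by linarith

lemma scaling {f : ℝ × ℝ → ℝ} (q : ℝ × ℝ) :
    G f q = q.1 * ∫ s in (0:ℝ)..1, f (s * q.1, q.2) := by
  have h : (fun x : ℝ => f (q.1 * x, q.2)) = fun x => f (x * q.1, q.2) := by
    funext x; rw [mul_comm]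
  have := intervalIntegral.smul_integral_comp_mul_left (f := fun t => f (t, q.2))
    (a := (0:ℝ)) (b := 1) q.1
  rw [h] at this
  simp only [mul_zero, mul_one, smul_eq_mul] at this
  rw [G, ← this]

noncomputable def Ms (s : ℝ) : ℝ × ℝ →L[ℝ] ℝ × ℝ :=
  (s • ContinuousLinearMap.fst ℝ ℝ ℝ).prod (ContinuousLinearMap.snd ℝ ℝ ℝ)

lemma Ms_apply (s : ℝ) (q : ℝ × ℝ) : Ms s q = (s * q.1, q.2) := rfl

lemma isC1_G {f f1 f2 : ℝ × ℝ → ℝ} (h : IsC1 f f1 f2) : IsC1 (G f) f (G f2) := by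
  refine ⟨continuous_G h.cont, h.cont, continuous_G h.cont2, ?_⟩
  intro p
  set F' : ℝ → (ℝ × ℝ →L[ℝ] ℝ) :=
    fun s => (s * f1 (s * p.1, p.2)) • e1 + (f2 (s * p.1, p.2)) • e2 with hF'
  have hF'cont : Continuous F' := by
    apply Continuous.add
    · exact (continuous_id.mul (h.cont1.comp (by fun_prop))).smul continuous_const
    · exact (h.cont2.comp (by fun_prop)).smul continuous_const
  -- derivative of q ↦ f (s * q.1, q.2) at an arbitrary point q
  have hcomp : ∀ (s : ℝ) (q : ℝ × ℝ), HasFDerivAt (fun q : ℝ × ℝ => f (s * q.1, q.2))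
      ((s * f1 (s * q.1, q.2)) • e1 + (f2 (s * q.1, q.2)) • e2) q := by
    intro s q
    have h1 : HasFDerivAt (fun q : ℝ × ℝ => ((s * q.1, q.2) : ℝ × ℝ)) (Ms s) q :=
      (Ms s).hasFDerivAt
    have h2 := (h.hderiv ((s * q.1, q.2))).comp q h1
    have h3 : ((f1 (s * q.1, q.2) • e1 + f2 (s * q.1, q.2) • e2).comp (Ms s))
        = (s * f1 (s * q.1, q.2)) • e1 + (f2 (s * q.1, q.2)) • e2 := by
      refine clm_ext2 ?_ ?_ <;>
        · simp [clm_eval, ContinuousLinearMap.comp_apply, Ms_apply, e1, e2]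
          try ring
    rw [h3] at h2
    exact h2
  -- the compact set and the bound
  set K : Set (ℝ × ℝ) :=
    (fun z : ℝ × (ℝ × ℝ) => ((z.1 * z.2.1, z.2.2) : ℝ × ℝ)) ''
      (Set.Icc (0:ℝ) 1 ×ˢ Metric.closedBall p 1) with hK
  have hKcomp : IsCompact K :=
    ((isCompact_Icc).prod (isCompact_closedBall p 1)).image (by fun_prop)
  obtain ⟨C, hC⟩ := hKcomp.exists_bound_of_continuousOn
    ((h.cont1.norm.add h.cont2.norm).continuousOn (s := K))
  have hC0 : ∀ z ∈ K, |f1 z| + |f2 z| ≤ C := by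
    intro z hz
    have := hC z hz
    rwa [Real.norm_eq_abs, abs_of_nonneg (a := ((fun x => ‖f1 x‖) + fun x => ‖f2 x‖) z) (add_nonneg (norm_nonneg _) (norm_nonneg _))] at this
  -- Lipschitz property
  have hlip : ∀ s ∈ Set.Icc (0:ℝ) 1,
      LipschitzOnWith (Real.nnabs C) (fun q : ℝ × ℝ => f (s * q.1, q.2)) (Metric.ball p 1) := by
    intro s hs
    have hconv : Convex ℝ (Metric.ball p 1) := convex_ball p 1
    refine Convex.lipschitzOnWith_of_nnnorm_hasFDerivWithin_le
      (f' := fun q => (s * f1 (s * q.1, q.2)) • e1 + (f2 (s * q.1, q.2)) • e2)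
      (fun q _ => (hcomp s q).hasFDerivWithinAt) ?_ hconv
    intro q hq
    have hzK : ((s * q.1, q.2) : ℝ × ℝ) ∈ K := by
      refine ⟨(s, q), ⟨hs, Metric.ball_subset_closedBall hq⟩, rfl⟩
    have hb := hC0 _ hzK
    have hnorm : ‖(s * f1 (s * q.1, q.2)) • e1 + (f2 (s * q.1, q.2)) • e2‖ ≤ C := by
      refine le_trans (norm_clm_le _ _) ?_
      have h1 : |s * f1 (s * q.1, q.2)| ≤ |f1 (s * q.1, q.2)| := by
        rw [abs_mul]
        have : |s| ≤ 1 := by rw [abs_of_nonneg hs.1]; exact hs.2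
        nlinarith [abs_nonneg (f1 (s * q.1, q.2))]
      linarith
    have : ‖(s * f1 (s * q.1, q.2)) • e1 + (f2 (s * q.1, q.2)) • e2‖ ≤ |C| :=
      le_trans hnorm (le_abs_self C)
    rw [← NNReal.coe_le_coe]
    simpa using this
  -- differentiation under the integral sign
  have key := hasFDerivAt_integral_of_dominated_loc_of_lip_interval
    (μ := volume) (F := fun (q : ℝ × ℝ) (s : ℝ) => f (s * q.1, q.2)) (F' := F')
    (a := 0) (b := 1) (x₀ := p) (bound := fun _ => C) (s := Metric.ball p 1) (Metric.ball_mem_nhds p one_pos)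
    (Filter.Eventually.of_forall fun q =>
      ((h.cont.comp (by fun_prop)).aestronglyMeasurable :
        AEStronglyMeasurable (fun s : ℝ => f (s * q.1, q.2)) _))
    ((h.cont.comp (by fun_prop)).intervalIntegrable 0 1)
    (hF'cont.aestronglyMeasurable)
    ?_ (intervalIntegrable_const) (Filter.Eventually.of_forall fun s => hcomp s p)
  case refine_1 =>
    have hsub : Set.uIoc (0:ℝ) 1 ⊆ Set.Icc 0 1 := by
      rw [Set.uIoc_of_le zero_le_one]
      exact Set.Ioc_subset_Icc_self
    refine (ae_restrict_iff' measurableSet_uIoc).mpr (Filter.Eventually.of_forall ?_)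
    intro s hsmem
    exact hlip s (hsub hsmem)
  obtain ⟨hint, hder⟩ := key
  -- from H to G f
  have hGH : (G f) = fun q : ℝ × ℝ => q.1 * ∫ s in (0:ℝ)..1, f (s * q.1, q.2) := by
    funext q; exact scaling q
  have hfst : HasFDerivAt (fun q : ℝ × ℝ => q.1) e1 p := (ContinuousLinearMap.fst ℝ ℝ ℝ).hasFDerivAt
  have hmul := hfst.mul hder
  rw [show ((fun q : ℝ × ℝ => q.1) * fun x : ℝ × ℝ => ∫ t in (0:ℝ)..1, f (t * x.1, x.2)) = G f from hGH.symm] at hmul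
  -- identify the derivative
  have hfinal : p.1 • (∫ s in (0:ℝ)..1, F' s) + (∫ s in (0:ℝ)..1, f (s * p.1, p.2)) • e1
      = f p • e1 + (G f2) p • e2 := by
    have happly : ∀ v : ℝ × ℝ, (∫ s in (0:ℝ)..1, F' s) v = ∫ s in (0:ℝ)..1, F' s v := by
      intro v
      rw [intervalIntegral.integral_of_le zero_le_one, intervalIntegral.integral_of_le zero_le_one]
      exact ContinuousLinearMap.integral_apply ((hF'cont.intervalIntegrable 0 1).1) v
    refine clm_ext2 ?_ ?_
    · -- value at (1,0)
      have h10 : (∫ s in (0:ℝ)..1, F' s) (1,0) = ∫ s in (0:ℝ)..1, s * f1 (s * p.1, p.2) := by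
        rw [happly]
        congr 1
        funext s
        simp [hF', clm_eval, e1, e2]
      have hFTC : ∫ s in (0:ℝ)..1, (s * (f1 (s * p.1, p.2) * p.1) + f (s * p.1, p.2)) = f p := by
        have hsc : Continuous fun s : ℝ => ((s * p.1, p.2) : ℝ × ℝ) := by fun_prop
        have hd : ∀ s ∈ Set.uIcc (0:ℝ) 1, HasDerivAt (fun s : ℝ => s * f (s * p.1, p.2))
            (s * (f1 (s * p.1, p.2) * p.1) + f (s * p.1, p.2)) s := by
          intro s _
          have hin : HasDerivAt (fun s : ℝ => ((s * p.1, p.2) : ℝ × ℝ)) ((p.1, 0) : ℝ × ℝ) s := by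
            simpa using ((hasDerivAt_id s).mul_const p.1).prodMk (hasDerivAt_const s p.2)
          have hf : HasDerivAt (fun s : ℝ => f (s * p.1, p.2)) (f1 (s * p.1, p.2) * p.1) s := by
            have := (h.hderiv ((s * p.1, p.2))).comp_hasDerivAt s hin
            exact this.congr_deriv (by simp [clm_eval, e1, e2])
          have hprod := (hasDerivAt_id s).mul hf
          simp only [id] at hprod
          refine hprod.congr_deriv ?_
          ring
        have hcont : Continuous fun s : ℝ => s * (f1 (s * p.1, p.2) * p.1) + f (s * p.1, p.2) :=
          (continuous_id.mul ((h.cont1.comp hsc).mul continuous_const)).add (h.cont.comp hsc)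
        have := intervalIntegral.integral_eq_sub_of_hasDerivAt hd (hcont.intervalIntegrable 0 1)
        simpa using this
      have hsplit : ∫ s in (0:ℝ)..1, (s * (f1 (s * p.1, p.2) * p.1) + f (s * p.1, p.2))
          = p.1 * (∫ s in (0:ℝ)..1, s * f1 (s * p.1, p.2)) + ∫ s in (0:ℝ)..1, f (s * p.1, p.2) := by
        have hsc : Continuous fun s : ℝ => ((s * p.1, p.2) : ℝ × ℝ) := by fun_prop
        have hi1 : IntervalIntegrable (fun s : ℝ => p.1 * (s * f1 (s * p.1, p.2))) volume 0 1 := by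
          refine Continuous.intervalIntegrable ?_ 0 1
          exact continuous_const.mul (continuous_id.mul (h.cont1.comp hsc))
        have hi2 : IntervalIntegrable (fun s : ℝ => f (s * p.1, p.2)) volume 0 1 := by
          refine Continuous.intervalIntegrable ?_ 0 1
          exact h.cont.comp hsc
        calc ∫ s in (0:ℝ)..1, (s * (f1 (s * p.1, p.2) * p.1) + f (s * p.1, p.2))
            = ∫ s in (0:ℝ)..1, (p.1 * (s * f1 (s * p.1, p.2)) + f (s * p.1, p.2)) := by
              congr 1
              funext s
              ring
          _ = (∫ s in (0:ℝ)..1, p.1 * (s * f1 (s * p.1, p.2)))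
              + ∫ s in (0:ℝ)..1, f (s * p.1, p.2) := intervalIntegral.integral_add hi1 hi2
          _ = p.1 * (∫ s in (0:ℝ)..1, s * f1 (s * p.1, p.2))
              + ∫ s in (0:ℝ)..1, f (s * p.1, p.2) := by
              rw [intervalIntegral.integral_const_mul]
      simp only [clm_eval, ContinuousLinearMap.add_apply, ContinuousLinearMap.smul_apply]
      rw [h10]
      simp [e1, e2]
      rw [hsplit] at hFTC
      linarith [hFTC]
    · -- value at (0,1)
      have h01 : (∫ s in (0:ℝ)..1, F' s) (0,1) = ∫ s in (0:ℝ)..1, f2 (s * p.1, p.2) := by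
        rw [happly]
        congr 1
        funext s
        simp [hF', clm_eval, e1, e2]
      simp only [clm_eval, ContinuousLinearMap.add_apply, ContinuousLinearMap.smul_apply]
      rw [h01]
      simp [e1, e2]
      rw [scaling (f := f2) p]
  rw [← hfinal]
  exact hmul


lemma IsC1.neg {f f1 f2 : ℝ × ℝ → ℝ} (h : IsC1 f f1 f2) :
    IsC1 (fun p => -f p) (fun p => -f1 p) (fun p => -f2 p) := by
  refine ⟨h.cont.neg, h.cont1.neg, h.cont2.neg, fun p => ?_⟩
  have := (h.hderiv p).neg
  refine this.congr_fderiv ?_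
  refine clm_ext2 ?_ ?_ <;> simp [clm_eval, e1, e2]

lemma pdxy_of_hasFDerivAt {f : ℝ × ℝ → ℝ} {a b : ℝ} {p : ℝ × ℝ}
    (h : HasFDerivAt f (a • e1 + b • e2) p) : pdx f p = a ∧ pdy f p = b := by
  constructor
  · rw [pdx, h.fderiv, clm_eval]; ring
  · rw [pdy, h.fderiv, clm_eval]; ring

lemma G_periodic {f : ℝ × ℝ → ℝ} {T : ℝ} (hper : ∀ x y, f (x, y + T) = f (x, y)) (x y : ℝ) :
    G f (x, y + T) = G f (x, y) := by
  simp only [G]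
  congr 1
  funext t
  exact hper t y

lemma Icc_int {b : ℝ} (hb : 0 ≤ b) (g : ℝ → ℝ) :
    ∫ y in Set.Icc (0:ℝ) b, g y = ∫ y in (0:ℝ)..b, g y := by
  rw [intervalIntegral.integral_of_le hb, integral_Icc_eq_integral_Ioc]

lemma rect_integral {f : ℝ × ℝ → ℝ} (hf : Continuous f) {a b : ℝ} :
    ∫ q in Set.Icc (0:ℝ) a ×ˢ Set.Icc (0:ℝ) b, f q
      = ∫ x in Set.Icc (0:ℝ) a, ∫ y in Set.Icc (0:ℝ) b, f (x, y) := by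
  have hint : IntegrableOn f (Set.Icc (0:ℝ) a ×ˢ Set.Icc (0:ℝ) b)
      ((volume : Measure ℝ).prod volume) := by
    rw [← Measure.volume_eq_prod]
    exact hf.continuousOn.integrableOn_compact (isCompact_Icc.prod isCompact_Icc)
  have h := setIntegral_prod f hint
  rw [← Measure.volume_eq_prod] at h
  exact h

lemma rect_integral_symm {f : ℝ × ℝ → ℝ} (hf : Continuous f) {a b : ℝ} :
    ∫ q in Set.Icc (0:ℝ) a ×ˢ Set.Icc (0:ℝ) b, f q
      = ∫ y in Set.Icc (0:ℝ) b, ∫ x in Set.Icc (0:ℝ) a, f (x, y) := by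
  have hint : IntegrableOn f (Set.Icc (0:ℝ) a ×ˢ Set.Icc (0:ℝ) b)
      ((volume : Measure ℝ).prod volume) := by
    rw [← Measure.volume_eq_prod]
    exact hf.continuousOn.integrableOn_compact (isCompact_Icc.prod isCompact_Icc)
  have h : ∫ z in Set.Icc (0:ℝ) a ×ˢ Set.Icc (0:ℝ) b, f z ∂((volume : Measure ℝ).prod volume)
      = ∫ y in Set.Icc (0:ℝ) b, ∫ x in Set.Icc (0:ℝ) a, f (x, y) := by
    simp only [← Measure.prod_restrict, IntegrableOn] at hint ⊢
    exact integral_prod_symm f hint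
  rw [← Measure.volume_eq_prod] at h
  exact h

end Stmt14Aux


open Stmt14Aux

/-- existence of a globally `y`-periodic Airy stress function.
For a smooth symmetric stress field on `Ω = [0,L]×[0,2πR]`, periodic in `y`,
satisfying the equilibrium equations, with `σ₁₂ = 0` at `x = 0, L` and
`∫_Ω σ₂₂ = 0`, there is `φ`, periodic in `y`, with
`σ₁₁ - (1/|Ω|)∫_Ω σ₁₁ = φ_yy`, `σ₁₂ = -φ_xy`, `σ₂₂ = φ_xx`, and `φ_x = 0`
at `x = 0` and `x = L`. -/
theorem stmt_14 (L R : ℝ) (hL : 0 < L) (hR : 0 < R)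
    (Ω : Set (ℝ × ℝ)) (hΩ : Ω = Set.Icc (0 : ℝ) L ×ˢ Set.Icc (0 : ℝ) (2 * Real.pi * R))
    (σ11 σ12 σ22 : ℝ × ℝ → ℝ)
    (h11 : ContDiff ℝ (⊤ : ℕ∞) σ11) (h12 : ContDiff ℝ (⊤ : ℕ∞) σ12) (h22 : ContDiff ℝ (⊤ : ℕ∞) σ22)
    (hper11 : ∀ x y : ℝ, σ11 (x, y + 2 * Real.pi * R) = σ11 (x, y))
    (hper12 : ∀ x y : ℝ, σ12 (x, y + 2 * Real.pi * R) = σ12 (x, y))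
    (hper22 : ∀ x y : ℝ, σ22 (x, y + 2 * Real.pi * R) = σ22 (x, y))
    (heq1 : ∀ p : ℝ × ℝ, pdx σ11 p + pdy σ12 p = 0)
    (heq2 : ∀ p : ℝ × ℝ, pdx σ12 p + pdy σ22 p = 0)
    (hbc : ∀ y : ℝ, σ12 (0, y) = 0 ∧ σ12 (L, y) = 0)
    (hmean : ∫ p in Ω, σ22 p = 0) :
    ∃ φ : ℝ × ℝ → ℝ,
      (∀ x y : ℝ, φ (x, y + 2 * Real.pi * R) = φ (x, y)) ∧
      (∀ p : ℝ × ℝ, σ11 p - (1 / (L * (2 * Real.pi * R))) * (∫ q in Ω, σ11 q) =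
        pdy (pdy φ) p) ∧
      (∀ p : ℝ × ℝ, σ12 p = -pdx (pdy φ) p) ∧
      (∀ p : ℝ × ℝ, σ22 p = pdx (pdx φ) p) ∧
      (∀ y : ℝ, pdx φ (0, y) = 0 ∧ pdx φ (L, y) = 0) := by
  have hπ : (0:ℝ) < Real.pi := Real.pi_pos
  set T : ℝ := 2 * Real.pi * R with hTdef
  have hT : 0 < T := by positivity
  have c11 := isC1_of_contDiff h11
  have c12 := isC1_of_contDiff h12
  have c22 := isC1_of_contDiff h22
  -- first integral: u = ∫₀ˣ σ22
  have hu0 := isC1_G c22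
  have hGpdy22 : G (pdy σ22) = fun p => -σ12 p := by
    funext p
    have hcongr : ∀ t : ℝ, pdy σ22 (t, p.2) = -pdx σ12 (t, p.2) := by
      intro t; linarith [heq2 (t, p.2)]
    calc G (pdy σ22) p = ∫ t in (0:ℝ)..p.1, -pdx σ12 (t, p.2) := by
          rw [G]; congr 1; funext t; exact hcongr t
      _ = -∫ t in (0:ℝ)..p.1, pdx σ12 (t, p.2) := intervalIntegral.integral_neg
      _ = -(σ12 (p.1, p.2) - σ12 (0, p.2)) := by rw [c12.ftc_fst]
      _ = -σ12 p := by rw [(hbc p.2).1]; simp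
  rw [hGpdy22] at hu0
  set u : ℝ × ℝ → ℝ := G σ22 with hudef
  have hu : IsC1 u σ22 (fun p => -σ12 p) := hu0
  -- Φ = ∫₀ˣ u
  set Φ : ℝ × ℝ → ℝ := G u with hΦdef
  set w : ℝ × ℝ → ℝ := G (fun p => -σ12 p) with hwdef
  have hΦ : IsC1 Φ u w := isC1_G hu
  -- w's partials
  have hw0 := isC1_G c12.neg
  have hGpdy12 : G (fun p => -pdy σ12 p) = fun p => σ11 p - σ11 (0, p.2) := by
    funext p
    have hcongr : ∀ t : ℝ, -pdy σ12 (t, p.2) = pdx σ11 (t, p.2) := by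
      intro t; linarith [heq1 (t, p.2)]
    calc G (fun p => -pdy σ12 p) p = ∫ t in (0:ℝ)..p.1, pdx σ11 (t, p.2) := by
          rw [G]; congr 1; funext t; exact hcongr t
      _ = σ11 (p.1, p.2) - σ11 (0, p.2) := by rw [c11.ftc_fst]
      _ = σ11 p - σ11 (0, p.2) := by simp
  rw [hGpdy12] at hw0
  have hw : IsC1 w (fun p => -σ12 p) (fun p => σ11 p - σ11 (0, p.2)) := hw0
  -- N x = ∫₀ᵀ σ11 (x, y) dy is constant
  have cs := c11.swap
  have hGs := isC1_G cs
  set N : ℝ → ℝ := fun x => G (fun q => σ11 (q.2, q.1)) (T, x) with hNdef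
  have hNderiv : ∀ x, HasDerivAt N 0 x := by
    intro x
    have h1 := hGs.hasDerivAt_snd T x
    have h2 : G (fun q : ℝ × ℝ => pdx σ11 (q.2, q.1)) (T, x) = 0 := by
      have hcongr : ∀ t : ℝ, pdx σ11 (x, t) = -pdy σ12 (x, t) := by
        intro t; linarith [heq1 (x, t)]
      have : G (fun q : ℝ × ℝ => pdx σ11 (q.2, q.1)) (T, x)
          = ∫ t in (0:ℝ)..T, -pdy σ12 (x, t) := by
        rw [G]; congr 1; funext t; exact hcongr t
      rw [this, intervalIntegral.integral_neg, c12.ftc_snd]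
      have := hper12 x 0
      rw [zero_add] at this
      rw [this]
      ring
    rwa [h2] at h1
  have hNconst : ∀ x, N x = N 0 := by
    intro x
    exact is_const_of_deriv_eq_zero (fun z => (hNderiv z).differentiableAt)
      (fun z => (hNderiv z).deriv) x 0
  -- value of ∫_Ω σ11
  have hN0 : N 0 = ∫ y in (0:ℝ)..T, σ11 (0, y) := rfl
  have hΩ11 : ∫ q in Ω, σ11 q = L * N 0 := by
    rw [hΩ, rect_integral c11.cont]
    have hinner : ∀ x : ℝ, ∫ y in Set.Icc (0:ℝ) T, σ11 (x, y) = N 0 := by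
      intro x
      rw [Icc_int hT.le]
      exact hNconst x
    calc ∫ x in Set.Icc (0:ℝ) L, ∫ y in Set.Icc (0:ℝ) T, σ11 (x, y)
        = ∫ _x in Set.Icc (0:ℝ) L, N 0 := by
          refine setIntegral_congr_fun measurableSet_Icc ?_
          intro x _
          exact hinner x
      _ = L * N 0 := by
          rw [setIntegral_const, measureReal_def, Real.volume_Icc, smul_eq_mul]
          rw [ENNReal.toReal_ofReal (by linarith)]
          ring_nf
  -- M y = u (L, y) is constant and zero
  have hMderiv : ∀ y, HasDerivAt (fun y => u (L, y)) 0 y := by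
    intro y
    have h1 := hu.hasDerivAt_snd L y
    have h2 : -σ12 (L, y) = 0 := by rw [(hbc y).2]; ring
    rwa [h2] at h1
  have hMconst : ∀ y, u (L, y) = u (L, 0) := by
    intro y
    exact is_const_of_deriv_eq_zero (fun z => (hMderiv z).differentiableAt)
      (fun z => (hMderiv z).deriv) y 0
  have hΩ22 : ∫ q in Ω, σ22 q = T * u (L, 0) := by
    rw [hΩ, rect_integral_symm c22.cont]
    have hinner : ∀ y : ℝ, ∫ x in Set.Icc (0:ℝ) L, σ22 (x, y) = u (L, 0) := by
      intro y
      rw [Icc_int hL.le]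
      exact hMconst y
    calc ∫ y in Set.Icc (0:ℝ) T, ∫ x in Set.Icc (0:ℝ) L, σ22 (x, y)
        = ∫ _y in Set.Icc (0:ℝ) T, u (L, 0) := by
          refine setIntegral_congr_fun measurableSet_Icc ?_
          intro y _
          exact hinner y
      _ = T * u (L, 0) := by
          rw [setIntegral_const, measureReal_def, Real.volume_Icc, smul_eq_mul]
          rw [ENNReal.toReal_ofReal (by linarith)]
          ring_nf
  have huL0 : u (L, 0) = 0 := by
    have h0 : T * u (L, 0) = 0 := by rw [← hΩ22, hmean]
    rcases mul_eq_zero.mp h0 with h | h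
    · exact absurd h hT.ne'
    · exact h
  have huL : ∀ y, u (L, y) = 0 := fun y => (hMconst y).trans huL0
  -- mean of σ11
  set pbar : ℝ := 1 / (L * T) * ∫ q in Ω, σ11 q with hpbardef
  have hpbarT : T * pbar = N 0 := by
    rw [hpbardef, hΩ11]
    field_simp
  -- the one-dimensional corrector A
  set g : ℝ → ℝ := fun y => σ11 (0, y) - pbar with hgdef
  have hgcont : Continuous g := (c11.cont.comp (by fun_prop)).sub continuous_const
  have hgper : ∀ y, g (y + T) = g y := by
    intro y
    simp only [hgdef]
    rw [hper11 0 y]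
  have hgint : ∫ y in (0:ℝ)..T, g y = 0 := by
    have hc1 : IntervalIntegrable (fun y : ℝ => σ11 (0, y)) volume 0 T := by
      refine Continuous.intervalIntegrable ?_ 0 T
      exact c11.cont.comp (by fun_prop)
    have hsplit : ∫ y in (0:ℝ)..T, g y
        = (∫ y in (0:ℝ)..T, σ11 (0, y)) - ∫ _y in (0:ℝ)..T, pbar := by
      rw [← intervalIntegral.integral_sub hc1 intervalIntegrable_const]
    rw [hsplit, intervalIntegral.integral_const, ← hN0, smul_eq_mul]
    rw [← hpbarT]
    ring
  set B0 : ℝ → ℝ := fun y => ∫ s in (0:ℝ)..y, g s with hB0def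
  have hB0cont : Continuous B0 :=
    intervalIntegral.continuous_primitive (fun a b => hgcont.intervalIntegrable a b) 0
  have hB0deriv : ∀ y, HasDerivAt B0 (g y) y := by
    intro y
    exact intervalIntegral.integral_hasDerivAt_right (hgcont.intervalIntegrable 0 y)
      (hgcont.stronglyMeasurable.stronglyMeasurableAtFilter)
      (hgcont.continuousAt)
  have hB0per : ∀ y, B0 (y + T) = B0 y := by
    intro y
    have hadd : (∫ s in (0:ℝ)..y, g s) + ∫ s in y..(y+T), g s = ∫ s in (0:ℝ)..(y+T), g s :=
      intervalIntegral.integral_add_adjacent_intervals (hgcont.intervalIntegrable 0 y)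
        (hgcont.intervalIntegrable y (y+T))
    have hper' : Function.Periodic g T := hgper
    have := hper'.intervalIntegral_add_eq y 0
    rw [zero_add] at this
    rw [this, hgint] at hadd
    simp only [hB0def]
    linarith
  set c : ℝ := -(1/T) * ∫ s in (0:ℝ)..T, B0 s with hcdef
  set B : ℝ → ℝ := fun y => B0 y + c with hBdef
  have hBcont : Continuous B := hB0cont.add continuous_const
  have hBderiv : ∀ y, HasDerivAt B (g y) y := by
    intro y
    exact (hB0deriv y).add_const c
  have hBint : ∫ y in (0:ℝ)..T, B y = 0 := by
    have hsplit : ∫ y in (0:ℝ)..T, B y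
        = (∫ y in (0:ℝ)..T, B0 y) + ∫ _y in (0:ℝ)..T, c := by
      rw [← intervalIntegral.integral_add (hB0cont.intervalIntegrable 0 T)
        intervalIntegrable_const]
    rw [hsplit, intervalIntegral.integral_const, smul_eq_mul, hcdef]
    field_simp
    ring
  have hBper : ∀ y, B (y + T) = B y := by
    intro y
    simp only [hBdef, hB0per y]
  set A : ℝ → ℝ := fun y => ∫ s in (0:ℝ)..y, B s with hAdef
  have hAderiv : ∀ y, HasDerivAt A (B y) y := by
    intro y
    exact intervalIntegral.integral_hasDerivAt_right (hBcont.intervalIntegrable 0 y)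
      (hBcont.stronglyMeasurable.stronglyMeasurableAtFilter)
      (hBcont.continuousAt)
  have hAper : ∀ y, A (y + T) = A y := by
    intro y
    have hadd : (∫ s in (0:ℝ)..y, B s) + ∫ s in y..(y+T), B s = ∫ s in (0:ℝ)..(y+T), B s :=
      intervalIntegral.integral_add_adjacent_intervals (hBcont.intervalIntegrable 0 y)
        (hBcont.intervalIntegrable y (y+T))
    have hper' : Function.Periodic B T := hBper
    have := hper'.intervalIntegral_add_eq y 0
    rw [zero_add] at this
    rw [this, hBint] at hadd
    simp only [hAdef]
    linarith
  -- derivative bookkeeping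
  have hsnd : ∀ p : ℝ × ℝ, HasFDerivAt (fun q : ℝ × ℝ => q.2) e2 p :=
    fun p => (ContinuousLinearMap.snd ℝ ℝ ℝ).hasFDerivAt
  have hφd : ∀ p : ℝ × ℝ, HasFDerivAt (fun p : ℝ × ℝ => Φ p + A p.2)
      (u p • e1 + (w p + B p.2) • e2) p := by
    intro p
    have h1 := hΦ.hderiv p
    have h2 : HasFDerivAt (fun q : ℝ × ℝ => A q.2) (B p.2 • e2) p :=
      (hAderiv p.2).comp_hasFDerivAt p (hsnd p)
    have h3 := h1.add h2
    refine h3.congr_fderiv ?_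
    rw [add_smul (w p)]
    abel
  have hφ_pdx : ∀ p : ℝ × ℝ, pdx (fun p : ℝ × ℝ => Φ p + A p.2) p = u p :=
    fun p => (pdxy_of_hasFDerivAt (hφd p)).1
  have hφ_pdy : pdy (fun p : ℝ × ℝ => Φ p + A p.2) = fun p => w p + B p.2 := by
    funext p
    exact (pdxy_of_hasFDerivAt (hφd p)).2
  have hpx : pdx (fun p : ℝ × ℝ => Φ p + A p.2) = u := funext hφ_pdx
  have hvd : ∀ p : ℝ × ℝ, HasFDerivAt (fun p : ℝ × ℝ => w p + B p.2)
      ((-σ12 p) • e1 + (σ11 p - pbar) • e2) p := by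
    intro p
    have h1 := hw.hderiv p
    have h2 : HasFDerivAt (fun q : ℝ × ℝ => B q.2) (g p.2 • e2) p :=
      (hBderiv p.2).comp_hasFDerivAt p (hsnd p)
    have h3 := h1.add h2
    refine h3.congr_fderiv ?_
    have : (σ11 p - pbar) = (σ11 p - σ11 (0, p.2)) + g p.2 := by
      simp only [hgdef]; ring
    rw [this, add_smul]
    abel
  -- the Airy function
  refine ⟨fun p => Φ p + A p.2, ?_, ?_, ?_, ?_, ?_⟩
  · -- periodicity
    intro x y
    have hΦper : Φ (x, y + T) = Φ (x, y) := by
      have huper : ∀ s t : ℝ, u (s, t + T) = u (s, t) := by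
        intro s t
        exact G_periodic (fun a b => hper22 a b) s t
      exact G_periodic huper x y
    simp only
    rw [hΦper, hAper y]
  · -- σ11 equation
    intro p
    rw [hφ_pdy]
    rw [(pdxy_of_hasFDerivAt (hvd p)).2]
  · -- σ12 equation
    intro p
    rw [hφ_pdy]
    rw [(pdxy_of_hasFDerivAt (hvd p)).1]
    ring
  · -- σ22 equation
    intro p
    rw [hpx]
    exact ((pdxy_of_hasFDerivAt (hu.hderiv p)).1).symm
  · -- boundary values
    intro y
    rw [hpx]
    constructor
    · show G σ22 (0, y) = 0
      simp [G]
    · exact huL y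
end
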